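/- arXiv:0906.4009 — 7 statements merged into one kernel-verified Lean document; each statement's English description precedes it below -/
import Mathlib

section
/- Let ψ : [0,1] → ℝⁿ be continuous on [0,1] and twice differentiable on (0,1). If ψ(0) ≥ 0, ψ(1) ≥ 0 and (Lψ)(x) ≥ 0 for all x ∈ (0,1), then ψ(x) ≥ 0 for all x ∈ [0,1]. -/
open Set Filter Topology

lemma second_deriv_nonneg_of_isLocalMin {f : ℝ → ℝ} {x₀ : ℝ}
    (hx : x₀ ∈ Set.Ioo (0:ℝ) 1)
    (hd : ∀ x ∈ Set.Ioo (0:ℝ) 1, DifferentiableAt ℝ f x)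
    (hd2 : DifferentiableAt ℝ (deriv f) x₀)
    (hmin : IsLocalMin f x₀) :
    0 ≤ deriv (deriv f) x₀ := by
  by_contra hcon
  push_neg at hcon
  have h1 : deriv f x₀ = 0 := hmin.deriv_eq_zero
  have hder : HasDerivAt (deriv f) (deriv (deriv f) x₀) x₀ := hd2.hasDerivAt
  have hslope : Tendsto (slope (deriv f) x₀) (𝓝[≠] x₀) (𝓝 (deriv (deriv f) x₀)) :=
    hasDerivAt_iff_tendsto_slope.1 hder
  have hev : ∀ᶠ z in 𝓝[≠] x₀, slope (deriv f) x₀ z < deriv (deriv f) x₀ / 2 :=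
    hslope.eventually_lt_const (by linarith)
  rw [eventually_nhdsWithin_iff] at hev
  have hoo : ∀ᶠ z in 𝓝 x₀, z ∈ Set.Ioo (0:ℝ) 1 := isOpen_Ioo.eventually_mem hx
  have hall := (hev.and (hoo.and hmin))
  rw [Metric.eventually_nhds_iff] at hall
  obtain ⟨δ, hδ, hball⟩ := hall
  obtain ⟨y, hy⟩ : ∃ y : ℝ, y = x₀ + δ / 2 := ⟨_, rfl⟩
  have hyx : x₀ < y := by linarith
  have hmemIoo : ∀ z ∈ Set.Icc x₀ y, z ∈ Set.Ioo (0:ℝ) 1 := by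
    intro z hz
    obtain ⟨hz1, hz2⟩ := hz
    have : dist z x₀ < δ := by rw [Real.dist_eq, abs_lt]; constructor <;> linarith
    exact (hball this).2.1
  have hcont : ContinuousOn f (Set.Icc x₀ y) :=
    fun z hz => (hd z (hmemIoo z hz)).continuousAt.continuousWithinAt
  obtain ⟨ξ, hξ, hξeq⟩ := exists_hasDerivAt_eq_slope f (deriv f) hyx hcont
    (fun z hz => (hd z (hmemIoo z ⟨le_of_lt hz.1, le_of_lt hz.2⟩)).hasDerivAt)
  obtain ⟨hξ1, hξ2⟩ := hξ
  have hξball : dist ξ x₀ < δ := by rw [Real.dist_eq, abs_lt]; constructor <;> linarith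
  have hsl' := (hball hξball).1 (by simp; exact ne_of_gt hξ1)
  rw [slope_def_field, div_lt_iff₀ (by linarith)] at hsl'
  rw [h1, sub_zero] at hsl'
  have hderneg : deriv f ξ < 0 := lt_of_lt_of_le hsl' (by nlinarith)
  have hfy : f x₀ ≤ f y := by
    have : dist y x₀ < δ := by rw [Real.dist_eq, abs_lt]; constructor <;> linarith
    exact (hball this).2.2
  rw [hξeq] at hderneg
  have : 0 ≤ (f y - f x₀) / (y - x₀) := div_nonneg (by linarith) (by linarith)
  linarith

noncomputable def Lop (n : ℕ) (ε : ℕ → ℝ) (A : ℝ → ℕ → ℕ → ℝ)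
    (ψ : ℝ → ℕ → ℝ) (x : ℝ) (i : ℕ) : ℝ :=
  -(ε i) * iteratedDeriv 2 (fun t => ψ t i) x + ∑ j ∈ Finset.Icc 1 n, A x i j * ψ x j

theorem stmt0
    (n : ℕ) (hn : 1 ≤ n)
    (ε : ℕ → ℝ) (hε0 : ∀ i, 1 ≤ i → i ≤ n → 0 < ε i)
    (hε1 : ∀ i, 1 ≤ i → i ≤ n → ε i ≤ 1)
    (hεm : ∀ i j, 1 ≤ i → i < j → j ≤ n → ε i < ε j)
    (A : ℝ → ℕ → ℕ → ℝ)
    (hAc : ∀ i j, 1 ≤ i → i ≤ n → 1 ≤ j → j ≤ n →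
      ContinuousOn (fun x => A x i j) (Set.Icc 0 1))
    (hAdiag : ∀ x ∈ Set.Icc (0:ℝ) 1, ∀ i, 1 ≤ i → i ≤ n →
      ∑ j ∈ (Finset.Icc 1 n).erase i, |A x i j| < A x i i)
    (hAoff : ∀ x ∈ Set.Icc (0:ℝ) 1, ∀ i j, 1 ≤ i → i ≤ n → 1 ≤ j → j ≤ n → i ≠ j → A x i j ≤ 0)
    (α : ℝ) (hα0 : 0 < α)
    (hα : ∀ x ∈ Set.Icc (0:ℝ) 1, ∀ i, 1 ≤ i → i ≤ n → α < ∑ j ∈ Finset.Icc 1 n, A x i j)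
    (ψ : ℝ → ℕ → ℝ)
    (hψc : ∀ i, 1 ≤ i → i ≤ n → ContinuousOn (fun x => ψ x i) (Set.Icc 0 1))
    (hψd : ∀ i, 1 ≤ i → i ≤ n → ∀ x ∈ Set.Ioo (0:ℝ) 1, DifferentiableAt ℝ (fun t => ψ t i) x)
    (hψd2 : ∀ i, 1 ≤ i → i ≤ n → ∀ x ∈ Set.Ioo (0:ℝ) 1,
      DifferentiableAt ℝ (deriv (fun t => ψ t i)) x)
    (hψ0 : ∀ i, 1 ≤ i → i ≤ n → 0 ≤ ψ 0 i)
    (hψ1 : ∀ i, 1 ≤ i → i ≤ n → 0 ≤ ψ 1 i)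
    (hLψ : ∀ x ∈ Set.Ioo (0:ℝ) 1, ∀ i, 1 ≤ i → i ≤ n → 0 ≤ Lop n ε A ψ x i) :
    ∀ x ∈ Set.Icc (0:ℝ) 1, ∀ i, 1 ≤ i → i ≤ n → 0 ≤ ψ x i := by
  have hne : (Finset.Icc 1 n).Nonempty := ⟨1, Finset.mem_Icc.2 ⟨le_refl 1, hn⟩⟩
  set F : ℝ → ℝ := fun x => (Finset.Icc 1 n).inf' hne (fun i => ψ x i) with hF
  have hFc : ContinuousOn F (Set.Icc 0 1) := by
    intro x hx
    exact ContinuousWithinAt.finset_inf'_apply hne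
      (fun i hi => by
        obtain ⟨hi1, hi2⟩ := Finset.mem_Icc.1 hi
        exact (hψc i hi1 hi2) x hx)
  obtain ⟨x₀, hx₀, hx₀min⟩ := isCompact_Icc.exists_isMinOn (nonempty_Icc.2 zero_le_one) hFc
  obtain ⟨i₀, hi₀mem, hi₀eq⟩ := Finset.exists_mem_eq_inf' hne (fun i => ψ x₀ i)
  obtain ⟨hi₀1, hi₀n⟩ := Finset.mem_Icc.1 hi₀mem
  have key : 0 ≤ ψ x₀ i₀ := by
    by_contra hneg
    push_neg at hneg
    -- x₀ is interior
    have hx0ne : x₀ ≠ 0 := by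
      rintro rfl; exact absurd (hψ0 i₀ hi₀1 hi₀n) (not_le.2 hneg)
    have hx1ne : x₀ ≠ 1 := by
      rintro rfl; exact absurd (hψ1 i₀ hi₀1 hi₀n) (not_le.2 hneg)
    have hIoo : x₀ ∈ Set.Ioo (0:ℝ) 1 :=
      ⟨lt_of_le_of_ne hx₀.1 (Ne.symm hx0ne), lt_of_le_of_ne hx₀.2 hx1ne⟩
    -- ψ x₀ i₀ is a global min of everything
    have hglob : ∀ z ∈ Set.Icc (0:ℝ) 1, ∀ j ∈ Finset.Icc 1 n, ψ x₀ i₀ ≤ ψ z j := by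
      intro z hz j hj
      calc ψ x₀ i₀ = F x₀ := hi₀eq.symm
        _ ≤ F z := hx₀min hz
        _ ≤ ψ z j := Finset.inf'_le _ hj
    have hmin : IsLocalMin (fun t => ψ t i₀) x₀ := by
      have : IsMinOn (fun t => ψ t i₀) (Set.Icc 0 1) x₀ :=
        fun z hz => hglob z hz i₀ hi₀mem
      exact this.isLocalMin (Icc_mem_nhds hIoo.1 hIoo.2)
    have hD : 0 ≤ iteratedDeriv 2 (fun t => ψ t i₀) x₀ := by
      rw [iteratedDeriv_succ, iteratedDeriv_one]
      exact second_deriv_nonneg_of_isLocalMin hIoo (hψd i₀ hi₀1 hi₀n)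
        (hψd2 i₀ hi₀1 hi₀n x₀ hIoo) hmin
    have hL := hLψ x₀ hIoo i₀ hi₀1 hi₀n
    unfold Lop at hL
    have hS : 0 ≤ ∑ j ∈ Finset.Icc 1 n, A x₀ i₀ j * ψ x₀ j := by
      nlinarith [hε0 i₀ hi₀1 hi₀n]
    have hsum_le : ∑ j ∈ Finset.Icc 1 n, A x₀ i₀ j * ψ x₀ j ≤
        (∑ j ∈ Finset.Icc 1 n, A x₀ i₀ j) * ψ x₀ i₀ := by
      rw [Finset.sum_mul]
      apply Finset.sum_le_sum
      intro j hj
      obtain ⟨hj1, hjn⟩ := Finset.mem_Icc.1 hj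
      rcases eq_or_ne i₀ j with rfl | hij
      · exact le_refl _
      · exact mul_le_mul_of_nonpos_left (hglob x₀ hx₀ j hj)
          (hAoff x₀ hx₀ i₀ j hi₀1 hi₀n hj1 hjn hij)
    have hSA : α < ∑ j ∈ Finset.Icc 1 n, A x₀ i₀ j := hα x₀ hx₀ i₀ hi₀1 hi₀n
    have hneg2 : (∑ j ∈ Finset.Icc 1 n, A x₀ i₀ j) * ψ x₀ i₀ < 0 :=
      mul_neg_of_pos_of_neg (hα0.trans hSA) hneg
    linarith
  intro x hx i h1 h2
  have hFx₀ : F x₀ = ψ x₀ i₀ := hi₀eq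
  have h3 : F x₀ ≤ F x := hx₀min hx
  have h4 : F x ≤ ψ x i := Finset.inf'_le _ (Finset.mem_Icc.2 ⟨h1, h2⟩)
  linarith
end

section
/- Let ψ : [0,1] → ℝⁿ be continuous on [0,1] and twice differentiable on (0,1) with sup_{x∈(0,1)} ‖(Lψ)(x)‖ < ∞. Then for each i, 1 ≤ i ≤ n, and every x ∈ [0,1]: |ψ_i(x)| ≤ max{ ‖ψ(0)‖, ‖ψ(1)‖, (1/α)·sup_{x∈(0,1)} ‖(Lψ)(x)‖ }. -/
/-!
Maximum principle. Take the largest value `m` of all components `ψ j` on `[0, 1]`, attained by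
`ψ i₀` at `x₀`. If `x₀` is an endpoint, `m` is bounded by the boundary norms; if `m ≤ 0` there
is nothing to prove. Otherwise `x₀` is an interior maximum, so `ψ i₀'' (x₀) ≤ 0`, and since the
off-diagonal entries of `A` are nonpositive,
`(Lψ)_{i₀}(x₀) ≥ ∑ⱼ a_{i₀ j}(x₀) ψ_j(x₀) ≥ (∑ⱼ a_{i₀ j}(x₀)) m ≥ α m`.
Applying the same bound to `-ψ` gives the lower bound.
-/

noncomputable def vnorm (n : ℕ) (V : ℕ → ℝ) : ℝ := ⨆ i ∈ Finset.Icc 1 n, |V i|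

open Filter Topology Set

lemma le_vnorm {n i : ℕ} (V : ℕ → ℝ) (hi : i ∈ Finset.Icc 1 n) : |V i| ≤ vnorm n V := by
  refine le_ciSup₂ (f := fun i (_ : i ∈ Finset.Icc 1 n) => |V i|) ?_ i hi
  refine ((Finset.Icc 1 n).finite_toSet.image fun i => |V i|).bddAbove.mono ?_
  intro y hy
  simp only [mem_iUnion, mem_range] at hy
  obtain ⟨j, hj, rfl⟩ := hy
  exact ⟨j, hj, rfl⟩

lemma vnorm_neg (n : ℕ) (V : ℕ → ℝ) : vnorm n (fun i => -V i) = vnorm n V := by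
  simp only [vnorm, abs_neg]

lemma Lop_neg (n : ℕ) (ε : ℕ → ℝ) (A : ℝ → ℕ → ℕ → ℝ) (ψ : ℝ → ℕ → ℝ) (x : ℝ) (i : ℕ) :
    Lop n ε A (fun x j => -ψ x j) x i = -Lop n ε A ψ x i := by
  simp only [Lop, iteratedDeriv_fun_neg, mul_neg, Finset.sum_neg_distrib]
  ring

/-- If `deriv (deriv f) x₀ > 0`, the second-derivative test makes `x₀` also a local minimum,
so `f` is locally constant and `deriv (deriv f) x₀ = 0`. -/
theorem IsLocalMax.deriv_deriv_nonpos {f : ℝ → ℝ} {x₀ : ℝ} (hmax : IsLocalMax f x₀)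
    (hc : ContinuousAt f x₀) : deriv (deriv f) x₀ ≤ 0 := by
  by_contra! hpos
  have hmin := isLocalMin_of_deriv_deriv_pos hpos hmax.deriv_eq_zero hc
  have hconst : f =ᶠ[𝓝 x₀] fun _ => f x₀ :=
    (hmax.and hmin).mono fun _ hx => le_antisymm hx.1 hx.2
  have := hconst.deriv.deriv_eq
  simp only [deriv_const', deriv_const] at this
  linarith

lemma exists_forall_le_of_continuousOn {X ι : Type*} [TopologicalSpace X] {K : Set X}
    (hK : IsCompact K) (hKne : K.Nonempty) {s : Finset ι} (hs : s.Nonempty) (f : X → ι → ℝ)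
    (hf : ∀ i ∈ s, ContinuousOn (fun x => f x i) K) :
    ∃ i ∈ s, ∃ x ∈ K, ∀ j ∈ s, ∀ y ∈ K, f y j ≤ f x i := by
  have hmaxima : ∀ i ∈ s, ∃ x ∈ K, IsMaxOn (fun y => f y i) K x :=
    fun i hi => hK.exists_isMaxOn hKne (hf i hi)
  have : Nonempty X := hKne.to_subtype.map Subtype.val
  choose! xm hxmK hxmax using hmaxima
  obtain ⟨i, hi, himax⟩ := s.exists_max_image (fun i => f (xm i) i) hs
  exact ⟨i, hi, xm i, hxmK i hi, fun j hj y hy => (hxmax j hj hy).trans (himax j hj)⟩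

lemma mul_le_Lop_of_forall_le {n i : ℕ} {ε : ℕ → ℝ} {A : ℝ → ℕ → ℕ → ℝ} {α m x : ℝ}
    {ψ : ℝ → ℕ → ℝ} (hε : 0 ≤ ε i)
    (hA : ∀ j ∈ Finset.Icc 1 n, j ≠ i → A x i j ≤ 0) (hα : α ≤ ∑ j ∈ Finset.Icc 1 n, A x i j)
    (hm : 0 ≤ m) (hψ : ∀ j ∈ Finset.Icc 1 n, ψ x j ≤ m) (hψi : ψ x i = m)
    (hψ'' : iteratedDeriv 2 (fun t => ψ t i) x ≤ 0) :
    α * m ≤ Lop n ε A ψ x i := by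
  have hsum : ∑ j ∈ Finset.Icc 1 n, A x i j * m ≤ ∑ j ∈ Finset.Icc 1 n, A x i j * ψ x j := by
    refine Finset.sum_le_sum fun j hj => ?_
    rcases eq_or_ne j i with rfl | hji
    · rw [hψi]
    · exact mul_le_mul_of_nonpos_left (hψ j hj) (hA j hj hji)
  have hdiffusion : 0 ≤ -ε i * iteratedDeriv 2 (fun t => ψ t i) x :=
    mul_nonneg_of_nonpos_of_nonpos (neg_nonpos.2 hε) hψ''
  calc α * m ≤ (∑ j ∈ Finset.Icc 1 n, A x i j) * m := mul_le_mul_of_nonneg_right hα hm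
    _ = ∑ j ∈ Finset.Icc 1 n, A x i j * m := Finset.sum_mul _ _ _
    _ ≤ Lop n ε A ψ x i := by rw [Lop]; linarith

lemma le_max_vnorm_of_Lop_le {n : ℕ} {ε : ℕ → ℝ} (hε0 : ∀ i, 1 ≤ i → i ≤ n → 0 < ε i)
    {A : ℝ → ℕ → ℕ → ℝ}
    (hAoff : ∀ x ∈ Icc (0:ℝ) 1, ∀ i j, 1 ≤ i → i ≤ n → 1 ≤ j → j ≤ n → i ≠ j → A x i j ≤ 0)
    {α : ℝ} (hα0 : 0 < α)
    (hα : ∀ x ∈ Icc (0:ℝ) 1, ∀ i, 1 ≤ i → i ≤ n → α < ∑ j ∈ Finset.Icc 1 n, A x i j)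
    {ψ : ℝ → ℕ → ℝ} (hψc : ∀ i, 1 ≤ i → i ≤ n → ContinuousOn (fun x => ψ x i) (Icc 0 1))
    {M : ℝ} (hM : ∀ x ∈ Ioo (0:ℝ) 1, ∀ i, 1 ≤ i → i ≤ n → Lop n ε A ψ x i ≤ M)
    {i : ℕ} (hi : i ∈ Finset.Icc 1 n) {x : ℝ} (hx : x ∈ Icc (0:ℝ) 1) :
    ψ x i ≤ max (max (vnorm n (ψ 0)) (vnorm n (ψ 1))) ((1 / α) * M) := by
  obtain ⟨i₀, hi₀, x₀, hx₀, hmax⟩ := exists_forall_le_of_continuousOn isCompact_Icc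
    (nonempty_Icc.2 zero_le_one) ⟨i, hi⟩ ψ
    fun j hj => hψc j (Finset.mem_Icc.1 hj).1 (Finset.mem_Icc.1 hj).2
  refine (hmax i hi x hx).trans ?_
  obtain ⟨hi₀1, hi₀n⟩ := Finset.mem_Icc.1 hi₀
  rcases hx₀.1.eq_or_lt with rfl | h0
  · exact (le_abs_self _).trans ((le_vnorm _ hi₀).trans (le_max_of_le_left (le_max_left _ _)))
  rcases hx₀.2.eq_or_lt with rfl | h1
  · exact (le_abs_self _).trans ((le_vnorm _ hi₀).trans (le_max_of_le_left (le_max_right _ _)))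
  rcases le_or_gt (ψ x₀ i₀) 0 with hnonpos | hpos
  · exact hnonpos.trans ((abs_nonneg _).trans
      ((le_vnorm (ψ 0) hi₀).trans (le_max_of_le_left (le_max_left _ _))))
  have hnhds : Icc (0:ℝ) 1 ∈ 𝓝 x₀ := Icc_mem_nhds h0 h1
  have hψ'' : iteratedDeriv 2 (fun t => ψ t i₀) x₀ ≤ 0 := by
    rw [iteratedDeriv_succ, iteratedDeriv_one]
    exact IsLocalMax.deriv_deriv_nonpos (mem_of_superset hnhds fun y hy => hmax i₀ hi₀ y hy)
      ((hψc i₀ hi₀1 hi₀n).continuousAt hnhds)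
  have hαM : α * ψ x₀ i₀ ≤ M := by
    refine (mul_le_Lop_of_forall_le (hε0 i₀ hi₀1 hi₀n).le ?_ (hα x₀ hx₀ i₀ hi₀1 hi₀n).le
      hpos.le (fun j hj => hmax j hj x₀ hx₀) rfl hψ'').trans (hM x₀ ⟨h0, h1⟩ i₀ hi₀1 hi₀n)
    intro j hj hji
    exact hAoff x₀ hx₀ i₀ j hi₀1 hi₀n (Finset.mem_Icc.1 hj).1 (Finset.mem_Icc.1 hj).2 hji.symm
  refine le_max_of_le_right ?_
  rwa [one_div, inv_mul_eq_div, le_div_iff₀ hα0, mul_comm]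

theorem stmt1_general
    (n : ℕ)
    (ε : ℕ → ℝ) (hε0 : ∀ i, 1 ≤ i → i ≤ n → 0 < ε i)
    (A : ℝ → ℕ → ℕ → ℝ)
    (hAoff : ∀ x ∈ Set.Icc (0:ℝ) 1, ∀ i j, 1 ≤ i → i ≤ n → 1 ≤ j → j ≤ n → i ≠ j → A x i j ≤ 0)
    (α : ℝ) (hα0 : 0 < α)
    (hα : ∀ x ∈ Set.Icc (0:ℝ) 1, ∀ i, 1 ≤ i → i ≤ n → α < ∑ j ∈ Finset.Icc 1 n, A x i j)
    (ψ : ℝ → ℕ → ℝ)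
    (hψc : ∀ i, 1 ≤ i → i ≤ n → ContinuousOn (fun x => ψ x i) (Set.Icc 0 1))
    (M : ℝ)
    (hM : ∀ x ∈ Set.Ioo (0:ℝ) 1, ∀ i, 1 ≤ i → i ≤ n → |Lop n ε A ψ x i| ≤ M) :
    ∀ i, 1 ≤ i → i ≤ n → ∀ x ∈ Set.Icc (0:ℝ) 1,
      |ψ x i| ≤ max (max (vnorm n (ψ 0)) (vnorm n (ψ 1))) ((1 / α) * M) := by
  intro i hi1 hin x hx
  have hi : i ∈ Finset.Icc 1 n := Finset.mem_Icc.2 ⟨hi1, hin⟩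
  have hupper := le_max_vnorm_of_Lop_le hε0 hAoff hα0 hα hψc
    (fun y hy j hj1 hjn => (le_abs_self _).trans (hM y hy j hj1 hjn)) hi hx
  have hlower := le_max_vnorm_of_Lop_le (ψ := fun y j => -ψ y j) hε0 hAoff hα0 hα
    (fun j hj1 hjn => (hψc j hj1 hjn).neg)
    (fun y hy j hj1 hjn => by
      rw [Lop_neg]
      exact (neg_le_abs _).trans (hM y hy j hj1 hjn)) hi hx
  rw [vnorm_neg, vnorm_neg] at hlower
  exact abs_le.2 ⟨neg_le.1 hlower, hupper⟩

theorem stmt1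
    (n : ℕ) (hn : 1 ≤ n)
    (ε : ℕ → ℝ) (hε0 : ∀ i, 1 ≤ i → i ≤ n → 0 < ε i)
    (hε1 : ∀ i, 1 ≤ i → i ≤ n → ε i ≤ 1)
    (hεm : ∀ i j, 1 ≤ i → i < j → j ≤ n → ε i < ε j)
    (A : ℝ → ℕ → ℕ → ℝ)
    (hAc : ∀ i j, 1 ≤ i → i ≤ n → 1 ≤ j → j ≤ n →
      ContinuousOn (fun x => A x i j) (Set.Icc 0 1))
    (hAdiag : ∀ x ∈ Set.Icc (0:ℝ) 1, ∀ i, 1 ≤ i → i ≤ n →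
      ∑ j ∈ (Finset.Icc 1 n).erase i, |A x i j| < A x i i)
    (hAoff : ∀ x ∈ Set.Icc (0:ℝ) 1, ∀ i j, 1 ≤ i → i ≤ n → 1 ≤ j → j ≤ n → i ≠ j → A x i j ≤ 0)
    (α : ℝ) (hα0 : 0 < α)
    (hα : ∀ x ∈ Set.Icc (0:ℝ) 1, ∀ i, 1 ≤ i → i ≤ n → α < ∑ j ∈ Finset.Icc 1 n, A x i j)
    (ψ : ℝ → ℕ → ℝ)
    (hψc : ∀ i, 1 ≤ i → i ≤ n → ContinuousOn (fun x => ψ x i) (Set.Icc 0 1))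
    (hψd : ∀ i, 1 ≤ i → i ≤ n → ∀ x ∈ Set.Ioo (0:ℝ) 1, DifferentiableAt ℝ (fun t => ψ t i) x)
    (hψd2 : ∀ i, 1 ≤ i → i ≤ n → ∀ x ∈ Set.Ioo (0:ℝ) 1,
      DifferentiableAt ℝ (deriv (fun t => ψ t i)) x)
    (M : ℝ)
    (hM : ∀ x ∈ Set.Ioo (0:ℝ) 1, ∀ i, 1 ≤ i → i ≤ n → |Lop n ε A ψ x i| ≤ M) :
    ∀ i, 1 ≤ i → i ≤ n → ∀ x ∈ Set.Icc (0:ℝ) 1,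
      |ψ x i| ≤ max (max (vnorm n (ψ 0)) (vnorm n (ψ 1))) ((1 / α) * M) :=
  stmt1_general n ε hε0 A hAoff α hα0 hα ψ hψc M hM
end

section
/- Assume in addition that A is three times continuously differentiable. There exists a constant C > 0, depending only on n, α, and on A and f (through the sup-norms of themselves and their derivatives up to third order), and independent of ε_1, …, ε_n, such that for k = 0, 1, 2, 3, each i and every x ∈ [0,1]: |v_i^{(k)}(x)| ≤ C · (1 + ε_i^{1−k/2}). -/
open Set Filter Topology

variable {ι : Type*}

theorem iteratedDeriv_two (g : ℝ → ℝ) : iteratedDeriv 2 g = deriv (deriv g) := by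
  rw [iteratedDeriv_succ, iteratedDeriv_one]

theorem iteratedDeriv_iteratedDeriv (m n : ℕ) (g : ℝ → ℝ) :
    iteratedDeriv m (iteratedDeriv n g) = iteratedDeriv (m + n) g := by
  simp only [iteratedDeriv_eq_iterate, Function.iterate_add_apply]

theorem IsLocalMax.deriv_deriv_nonpos_s4 {g : ℝ → ℝ} {x : ℝ} (h : IsLocalMax g x)
    (hc : ContinuousAt g x) : deriv (deriv g) x ≤ 0 := by
  by_contra! hpos
  -- the second-derivative test makes `x` a local minimum as well, so `g` is locally constant
  have hconst : g =ᶠ[𝓝 x] fun _ => g x :=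
    ((isLocalMin_of_deriv_deriv_pos hpos h.deriv_eq_zero hc).and h).mono
      fun _ hy => le_antisymm hy.2 hy.1
  have : deriv (deriv g) x = 0 := by
    rw [hconst.deriv.deriv_eq]
    simp
  linarith

theorem abs_sub_le_of_abs_deriv_le {g : ℝ → ℝ} {p q K : ℝ} (hc : ContinuousOn g (Icc p q))
    (hd : DifferentiableOn ℝ g (Ioo p q)) (hK : ∀ y ∈ Ioo p q, |deriv g y| ≤ K)
    {a b : ℝ} (ha : a ∈ Icc p q) (hb : b ∈ Icc p q) : |g b - g a| ≤ K * |b - a| := by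
  wlog hab : a < b generalizing a b
  · rcases (not_lt.mp hab).eq_or_lt with rfl | hba
    · simp
    · rw [abs_sub_comm, abs_sub_comm b]
      exact this hb ha hba
  have hsub : Icc a b ⊆ Icc p q := Icc_subset_Icc ha.1 hb.2
  obtain ⟨c, hc', hcd⟩ := exists_deriv_eq_slope g hab (hc.mono hsub)
    (hd.mono (Ioo_subset_Ioo ha.1 hb.2))
  have hba : b - a ≠ 0 := sub_ne_zero.mpr hab.ne'
  rw [show g b - g a = deriv g c * (b - a) by rw [hcd]; field_simp, abs_mul]
  exact mul_le_mul_of_nonneg_right (hK c (Ioo_subset_Ioo ha.1 hb.2 hc')) (abs_nonneg _)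

theorem abs_deriv_le_of_abs_le {u : ℝ → ℝ} {K₀ K₂ : ℝ} (hu : Differentiable ℝ u)
    (hu' : ContinuousOn (deriv u) (Icc 0 1)) (hu'' : DifferentiableOn ℝ (deriv u) (Ioo 0 1))
    (h₀ : ∀ y ∈ Icc (0:ℝ) 1, |u y| ≤ K₀) (h₂ : ∀ y ∈ Ioo (0:ℝ) 1, |deriv (deriv u) y| ≤ K₂)
    {h : ℝ} (hh : h ∈ Ioc (0:ℝ) 1) {x : ℝ} (hx : x ∈ Icc (0:ℝ) 1) :
    |deriv u x| ≤ 2 * K₀ / h + h * K₂ := by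
  obtain ⟨hh0, hh1⟩ := hh
  set p := min x (1 - h)
  have hp0 : 0 ≤ p := le_min hx.1 (by linarith)
  have hp1 : p + h ≤ 1 := by linarith [min_le_right x (1 - h)]
  have hxp : x ∈ Icc p (p + h) :=
    ⟨min_le_left _ _, by linarith [show x - h ≤ p from le_min (by linarith) (by linarith [hx.2])]⟩
  obtain ⟨ξ, hξ, hξd⟩ := exists_deriv_eq_slope u (lt_add_of_pos_right p hh0)
    hu.continuous.continuousOn hu.differentiableOn
  have hslope : |deriv u ξ| ≤ 2 * K₀ / h := by
    rw [hξd, add_sub_cancel_left, abs_div, abs_of_pos hh0]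
    refine div_le_div_of_nonneg_right ?_ hh0.le
    calc |u (p + h) - u p| ≤ |u (p + h)| + |u p| := abs_sub _ _
      _ ≤ 2 * K₀ := by linarith [h₀ _ ⟨by linarith, hp1⟩, h₀ _ ⟨hp0, by linarith⟩]
  have hlip : |deriv u x - deriv u ξ| ≤ K₂ * |x - ξ| :=
    abs_sub_le_of_abs_deriv_le (hu'.mono (Icc_subset_Icc hp0 hp1))
      (hu''.mono (Ioo_subset_Ioo hp0 hp1)) (fun y hy => h₂ y (Ioo_subset_Ioo hp0 hp1 hy))
      (Ioo_subset_Icc_self hξ) hxp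
  have hK₂ : 0 ≤ K₂ := (abs_nonneg _).trans (h₂ ξ (Ioo_subset_Ioo hp0 hp1 hξ))
  have hxξ : |x - ξ| ≤ h :=
    abs_sub_le_iff.mpr ⟨by linarith [hxp.2, hξ.1], by linarith [hxp.1, hξ.2]⟩
  calc |deriv u x| ≤ |deriv u ξ| + |deriv u x - deriv u ξ| := by
        linarith [abs_sub_abs_le_abs_sub (deriv u x) (deriv u ξ)]
    _ ≤ 2 * K₀ / h + K₂ * h :=
        add_le_add hslope (hlip.trans (mul_le_mul_of_nonneg_left hxξ hK₂))
    _ = 2 * K₀ / h + h * K₂ := by ring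

theorem le_of_forall_le_div_add_mul {M K a b : ℝ} (hM : 0 ≤ M) (ha : 0 ≤ a)
    (h : ∀ t ∈ Ioc (0:ℝ) 1, M ≤ K / t + t * (a + b * M)) :
    M ≤ 2 * K * max 1 (2 * b) + 2 * a := by
  set m := max 1 (2 * b)
  have hm1 : 1 ≤ m := le_max_left _ _
  have hmb : 2 * b ≤ m := le_max_right _ _
  have hm0 : 0 < m := by linarith
  have ht := h m⁻¹ ⟨inv_pos.mpr hm0, inv_le_one_of_one_le₀ hm1⟩
  rw [div_inv_eq_mul] at ht
  have hta : m⁻¹ * a ≤ a := mul_le_of_le_one_left ha (inv_le_one_of_one_le₀ hm1)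
  have htb : m⁻¹ * (b * M) ≤ M / 2 := by
    rw [← mul_assoc, div_eq_mul_inv, mul_comm M]
    exact mul_le_mul_of_nonneg_right (by rw [inv_mul_le_iff₀ hm0]; linarith) hM
  linarith [mul_add m⁻¹ a (b * M)]

theorem abs_le_mul_one_add_rpow {C e : ℝ} {y : ℕ → ℝ} (hC : 0 ≤ C) (he : 0 < e)
    (hy : ∀ k ≤ 2, |y k| ≤ C) (hy₃ : |y 3| ≤ C / √e) :
    ∀ k ≤ 3, |y k| ≤ C * (1 + e ^ (1 - (k : ℝ) / 2)) := by
  intro k hk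
  rcases Nat.lt_or_eq_of_le hk with hk | rfl
  · exact (hy k (by omega)).trans
      (le_mul_of_one_le_right hC (le_add_of_nonneg_right (Real.rpow_nonneg he.le _)))
  · have : e ^ (1 - ((3 : ℕ) : ℝ) / 2) = (√e)⁻¹ := by
      rw [Real.sqrt_eq_rpow, ← Real.rpow_neg he.le]
      norm_num
    rw [this]
    refine hy₃.trans ?_
    rw [div_eq_mul_inv]
    exact mul_le_mul_of_nonneg_left (le_add_of_nonneg_left zero_le_one) hC

theorem exists_forall_abs_iteratedDeriv_le (s : Finset ι) (g : ι → ℝ → ℝ) {m : ℕ}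
    (hg : ∀ i ∈ s, ContDiff ℝ m (g i)) :
    ∃ B, ∀ k ≤ m, ∀ i ∈ s, ∀ x ∈ Icc (0:ℝ) 1, |iteratedDeriv k (g i) x| ≤ B := by
  set F : ℝ → ℝ := fun x => ∑ k ∈ Finset.range (m + 1), ∑ i ∈ s, |iteratedDeriv k (g i) x|
  have hF : Continuous F := continuous_finsetSum _ fun k hk => continuous_finsetSum _ fun i hi =>
    ((hg i hi).continuous_iteratedDeriv k (by exact_mod_cast Finset.mem_range_succ_iff.mp hk)).abs
  obtain ⟨B, hB⟩ := isCompact_Icc.exists_bound_of_continuousOn hF.continuousOn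
  refine ⟨B, fun k hk i hi x hx => ?_⟩
  calc |iteratedDeriv k (g i) x| ≤ ∑ i ∈ s, |iteratedDeriv k (g i) x| :=
        Finset.single_le_sum (f := fun i => |iteratedDeriv k (g i) x|) (fun _ _ => abs_nonneg _) hi
    _ ≤ F x := Finset.single_le_sum (f := fun k => ∑ i ∈ s, |iteratedDeriv k (g i) x|)
        (fun _ _ => Finset.sum_nonneg fun _ _ => abs_nonneg _) (Finset.mem_range_succ_iff.mpr hk)
    _ ≤ B := (le_abs_self _).trans (hB x hx)

theorem abs_sum_le_card_mul {s : Finset ι} {t : ι → ℝ} {c : ℝ}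
    (h : ∀ j ∈ s, |t j| ≤ c) : |∑ j ∈ s, t j| ≤ s.card * c :=
  (Finset.abs_sum_le_sum_abs _ _).trans
    ((Finset.sum_le_card_nsmul _ _ _ h).trans_eq (nsmul_eq_mul _ _))

theorem abs_mul_le_of_abs_le {x y X Y : ℝ} (hx : |x| ≤ X) (hy : |y| ≤ Y) : |x * y| ≤ X * Y :=
  abs_mul x y ▸ mul_le_mul hx hy (abs_nonneg _) ((abs_nonneg _).trans hx)

theorem mul_le_sum_mul_of_forall_le {s : Finset ι} {c w : ι → ℝ} {α : ℝ} {i : ι}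
    (hi : i ∈ s) (hoff : ∀ j ∈ s, j ≠ i → c j ≤ 0) (hsum : α ≤ ∑ j ∈ s, c j) (hw : 0 ≤ w i)
    (hmax : ∀ j ∈ s, w j ≤ w i) : α * w i ≤ ∑ j ∈ s, c j * w j :=
  calc α * w i ≤ (∑ j ∈ s, c j) * w i := mul_le_mul_of_nonneg_right hsum hw
    _ = ∑ j ∈ s, c j * w i := Finset.sum_mul _ _ _
    _ ≤ ∑ j ∈ s, c j * w j := Finset.sum_le_sum fun j hj => by
        rcases eq_or_ne j i with rfl | hji
        · rfl
        · exact mul_le_mul_of_nonpos_left (hmax j hj) (hoff j hj hji)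

theorem exists_forall_abs_le_abs {s : Finset ι} (hs : s.Nonempty) {z : ι → ℝ → ℝ}
    (hz : ∀ i ∈ s, ContinuousOn (z i) (Icc 0 1)) :
    ∃ x₀ ∈ Icc (0:ℝ) 1, ∃ i₀ ∈ s, ∀ x ∈ Icc (0:ℝ) 1, ∀ i ∈ s, |z i x| ≤ |z i₀ x₀| := by
  obtain ⟨x₀, hx₀, hmax⟩ := isCompact_Icc.exists_isMaxOn (nonempty_Icc.mpr zero_le_one)
    (ContinuousOn.finset_sup'_apply hs fun i hi => (hz i hi).abs)
  obtain ⟨i₀, hi₀, heq⟩ := Finset.exists_mem_eq_sup' hs fun i => |z i x₀|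
  refine ⟨x₀, hx₀, i₀, hi₀, fun x hx i hi => ?_⟩
  calc |z i x| ≤ s.sup' hs (fun i => |z i x|) := Finset.le_sup' (fun i => |z i x|) hi
    _ ≤ s.sup' hs (fun i => |z i x₀|) := by simpa using hmax hx
    _ = |z i₀ x₀| := heq

theorem exists_abs_eq_one_mul_eq_abs (r : ℝ) : ∃ σ : ℝ, |σ| = 1 ∧ σ * r = |r| := by
  rcases le_or_gt 0 r with hr | hr
  · exact ⟨1, abs_one, by rw [one_mul, abs_of_nonneg hr]⟩
  · exact ⟨-1, by simp, by rw [abs_of_neg hr]; ring⟩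

structure IsDominantZMatrix (s : Finset ι) (a : ι → ι → ℝ → ℝ) (α : ℝ) : Prop where
  offDiag_nonpos : ∀ x ∈ Icc (0:ℝ) 1, ∀ i ∈ s, ∀ j ∈ s, j ≠ i → a i j x ≤ 0
  le_rowSum : ∀ x ∈ Icc (0:ℝ) 1, ∀ i ∈ s, α ≤ ∑ j ∈ s, a i j x

-- No differentiability of `z` is needed: `IsLocalMax.deriv_deriv_nonpos` holds whatever value
-- `deriv` takes.
theorem IsDominantZMatrix.maximum_principle {s : Finset ι} {a : ι → ι → ℝ → ℝ} {α G : ℝ}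
    {ε : ι → ℝ} {z : ι → ℝ → ℝ} (ha : IsDominantZMatrix s a α) (hα : 0 ≤ α)
    (hε : ∀ i ∈ s, 0 ≤ ε i) (hz : ∀ i ∈ s, ContinuousOn (z i) (Icc 0 1))
    (hbdry : ∀ x ∈ ({0, 1} : Set ℝ), ∀ i ∈ s, |∑ j ∈ s, a i j x * z j x| ≤ G)
    (hint : ∀ x ∈ Ioo (0:ℝ) 1, ∀ i ∈ s,
      |-ε i * iteratedDeriv 2 (z i) x + ∑ j ∈ s, a i j x * z j x| ≤ G) :
    ∀ x ∈ Icc (0:ℝ) 1, ∀ i ∈ s, α * |z i x| ≤ G := by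
  intro x hx i hi
  obtain ⟨x₀, hx₀, i₀, hi₀, hmax⟩ := exists_forall_abs_le_abs ⟨i, hi⟩ hz
  obtain ⟨σ, hσ, hσz⟩ := exists_abs_eq_one_mul_eq_abs (z i₀ x₀)
  have hσle : ∀ r, σ * r ≤ |r| := fun r => by simpa [abs_mul, hσ] using le_abs_self (σ * r)
  have hrow : α * |z i₀ x₀| ≤ σ * ∑ j ∈ s, a i₀ j x₀ * z j x₀ := by
    rw [← hσz, Finset.mul_sum]
    simp only [mul_left_comm σ]
    exact mul_le_sum_mul_of_forall_le hi₀ (ha.offDiag_nonpos x₀ hx₀ i₀ hi₀)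
      (ha.le_rowSum x₀ hx₀ i₀ hi₀) (hσz ▸ abs_nonneg _)
      fun j hj => (hσle _).trans ((hmax x₀ hx₀ j hj).trans hσz.ge)
  have hmain : α * |z i₀ x₀| ≤ G := by
    rcases eq_endpoints_or_mem_Ioo_of_mem_Icc hx₀ with h | h | h
    · exact hrow.trans ((hσle _).trans (hbdry x₀ (by simp [h]) i₀ hi₀))
    · exact hrow.trans ((hσle _).trans (hbdry x₀ (by simp [h]) i₀ hi₀))
    have hloc : IsLocalMax (fun y => σ * z i₀ y) x₀ :=
      Filter.eventually_of_mem (Icc_mem_nhds h.1 h.2) fun y hy =>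
        (hσle _).trans ((hmax y hy i₀ hi₀).trans hσz.ge)
    have hcurv : σ * iteratedDeriv 2 (z i₀) x₀ ≤ 0 := by
      have := hloc.deriv_deriv_nonpos_s4
        (continuousAt_const.mul ((hz i₀ hi₀).continuousAt (Icc_mem_nhds h.1 h.2)))
      simpa [iteratedDeriv_two, deriv_const_mul_field'] using this
    calc α * |z i₀ x₀| ≤ σ * ∑ j ∈ s, a i₀ j x₀ * z j x₀ := hrow
      _ = σ * (-ε i₀ * iteratedDeriv 2 (z i₀) x₀ + ∑ j ∈ s, a i₀ j x₀ * z j x₀)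
          + ε i₀ * (σ * iteratedDeriv 2 (z i₀) x₀) := by ring
      _ ≤ G + 0 := add_le_add ((hσle _).trans (hint x₀ h i₀ hi₀))
          (mul_nonpos_of_nonneg_of_nonpos (hε i₀ hi₀) hcurv)
      _ = G := add_zero G
  exact (mul_le_mul_of_nonneg_left (hmax x hx i hi) hα).trans hmain

section Solution

variable {s : Finset ι} {a : ι → ι → ℝ → ℝ} {f v : ι → ℝ → ℝ} {ε : ι → ℝ} {α B : ℝ}

structure IsC2Bound (s : Finset ι) (a : ι → ι → ℝ → ℝ) (f : ι → ℝ → ℝ) (B : ℝ) : Prop where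
  contDiff_coeff : ∀ i ∈ s, ∀ j ∈ s, ContDiff ℝ 2 (a i j)
  contDiff_rhs : ∀ i ∈ s, ContDiff ℝ 2 (f i)
  abs_coeff_le : ∀ k ≤ 2, ∀ i ∈ s, ∀ j ∈ s, ∀ x ∈ Icc (0:ℝ) 1, |iteratedDeriv k (a i j) x| ≤ B
  abs_rhs_le : ∀ k ≤ 2, ∀ i ∈ s, ∀ x ∈ Icc (0:ℝ) 1, |iteratedDeriv k (f i) x| ≤ B

theorem exists_isC2Bound (ha : ∀ i ∈ s, ∀ j ∈ s, ContDiff ℝ 2 (a i j))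
    (hf : ∀ i ∈ s, ContDiff ℝ 2 (f i)) : ∃ B, IsC2Bound s a f B := by
  obtain ⟨Ba, hBa⟩ := exists_forall_abs_iteratedDeriv_le (s ×ˢ s) (fun p => a p.1 p.2)
    fun p hp => ha p.1 (Finset.mem_product.mp hp).1 p.2 (Finset.mem_product.mp hp).2
  obtain ⟨Bf, hBf⟩ := exists_forall_abs_iteratedDeriv_le s f hf
  exact ⟨max Ba Bf, ha, hf,
    fun k hk i hi j hj x hx =>
      (hBa k hk (i, j) (Finset.mem_product.mpr ⟨hi, hj⟩) x hx).trans (le_max_left _ _),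
    fun k hk i hi x hx => (hBf k hk i hi x hx).trans (le_max_right _ _)⟩

structure IsBVPSolution (s : Finset ι) (ε : ι → ℝ) (a : ι → ι → ℝ → ℝ) (f v : ι → ℝ → ℝ) :
    Prop where
  contDiff : ∀ i ∈ s, ContDiff ℝ 3 (v i)
  eq_of_mem_Ioo : ∀ x ∈ Ioo (0:ℝ) 1, ∀ i ∈ s,
    -ε i * iteratedDeriv 2 (v i) x + ∑ j ∈ s, a i j x * v j x = f i x
  eq_of_boundary : ∀ x ∈ ({0, 1} : Set ℝ), ∀ i ∈ s, ∑ j ∈ s, a i j x * v j x = f i x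

namespace IsBVPSolution

theorem contDiff_residual (hv : IsBVPSolution s ε a f v) (hC : IsC2Bound s a f B) {i : ι}
    (hi : i ∈ s) : ContDiff ℝ 2 fun y => ∑ j ∈ s, a i j y * v j y - f i y :=
  (ContDiff.sum fun j hj => (hC.contDiff_coeff i hi j hj).mul
    ((hv.contDiff j hj).of_le (by norm_num))).sub (hC.contDiff_rhs i hi)

theorem iteratedDeriv_two_eq_zero (hv : IsBVPSolution s ε a f v) (hC : IsC2Bound s a f B)
    (hε : ∀ i ∈ s, ε i ≠ 0) : ∀ x ∈ ({0, 1} : Set ℝ), ∀ i ∈ s, iteratedDeriv 2 (v i) x = 0 := by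
  intro x hx i hi
  have hcont : Continuous fun y => ε i * iteratedDeriv 2 (v i) y :=
    continuous_const.mul ((hv.contDiff i hi).continuous_iteratedDeriv 2 (by norm_num))
  have heq : EqOn (fun y => ε i * iteratedDeriv 2 (v i) y)
      (fun y => ∑ j ∈ s, a i j y * v j y - f i y) (closure (Ioo 0 1)) :=
    EqOn.closure (fun y hy => by linarith [hv.eq_of_mem_Ioo y hy i hi]) hcont
      (hv.contDiff_residual hC hi).continuous
  have hx' : x ∈ closure (Ioo (0:ℝ) 1) := by
    rw [closure_Ioo zero_ne_one]
    rcases hx with rfl | rfl <;> simp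
  have := heq hx'
  simp only [hv.eq_of_boundary x hx i hi, sub_self, mul_eq_zero] at this
  exact this.resolve_left (hε i hi)

theorem iteratedDeriv_two_eventuallyEq (hv : IsBVPSolution s ε a f v) {i : ι} (hi : i ∈ s)
    (hε : ε i ≠ 0) {x : ℝ} (hx : x ∈ Ioo (0:ℝ) 1) :
    iteratedDeriv 2 (v i) =ᶠ[𝓝 x] fun y => (∑ j ∈ s, a i j y * v j y - f i y) / ε i :=
  eventually_of_mem (isOpen_Ioo.mem_nhds hx) fun y hy => by
    rw [eq_div_iff hε]
    linarith [hv.eq_of_mem_Ioo y hy i hi]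

theorem differentiableAt_iteratedDeriv_three (hv : IsBVPSolution s ε a f v)
    (hC : IsC2Bound s a f B) {i : ι} (hi : i ∈ s) (hε : ε i ≠ 0) {x : ℝ}
    (hx : x ∈ Ioo (0:ℝ) 1) : DifferentiableAt ℝ (iteratedDeriv 3 (v i)) x := by
  rw [iteratedDeriv_succ, (hv.iteratedDeriv_two_eventuallyEq hi hε hx).deriv.differentiableAt_iff,
    ← iteratedDeriv_one]
  exact ((hv.contDiff_residual hC hi).div_const _).differentiable_iteratedDeriv 1
    (by norm_num) x

theorem mul_iteratedDeriv_four (hv : IsBVPSolution s ε a f v) (hC : IsC2Bound s a f B)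
    {i : ι} (hi : i ∈ s) (hε : ε i ≠ 0) {x : ℝ} (hx : x ∈ Ioo (0:ℝ) 1) :
    ε i * iteratedDeriv 4 (v i) x = ∑ j ∈ s, (iteratedDeriv 2 (a i j) x * v j x
      + 2 * (deriv (a i j) x * deriv (v j) x) + a i j x * iteratedDeriv 2 (v j) x)
      - iteratedDeriv 2 (f i) x := by
  have hv2 : ∀ j ∈ s, ContDiff ℝ 2 (v j) := fun j hj => (hv.contDiff j hj).of_le (by norm_num)
  rw [← iteratedDeriv_iteratedDeriv 2 2,
    (hv.iteratedDeriv_two_eventuallyEq hi hε hx).iteratedDeriv_eq,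
    iteratedDeriv_div_const, mul_div_cancel₀ _ hε, iteratedDeriv_fun_sub
      (ContDiff.sum fun j hj => (hC.contDiff_coeff i hi j hj).mul (hv2 j hj)).contDiffAt
      (hC.contDiff_rhs i hi).contDiffAt,
    iteratedDeriv_fun_sum fun j hj => ((hC.contDiff_coeff i hi j hj).mul (hv2 j hj)).contDiffAt]
  congr 1
  refine Finset.sum_congr rfl fun j hj => ?_
  rw [iteratedDeriv_fun_mul (hC.contDiff_coeff i hi j hj).contDiffAt (hv2 j hj).contDiffAt]
  simp only [Finset.sum_range_succ, Finset.range_one, Finset.sum_singleton, Nat.choose_zero_right,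
    Nat.choose_succ_self_right, Nat.choose_self, Nat.cast_one, Nat.cast_ofNat, iteratedDeriv_zero,
    iteratedDeriv_one, Nat.reduceAdd, Nat.add_one_sub_one, tsub_zero, tsub_self, one_mul]
  ring

theorem mul_abs_le (hv : IsBVPSolution s ε a f v) (ha : IsDominantZMatrix s a α)
    (hα : 0 ≤ α) (hε : ∀ i ∈ s, 0 ≤ ε i) (hC : IsC2Bound s a f B) :
    ∀ x ∈ Icc (0:ℝ) 1, ∀ i ∈ s, α * |v i x| ≤ B :=
  ha.maximum_principle hα hε
    (fun i hi => (hv.contDiff i hi).continuous.continuousOn)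
    (fun x hx i hi => by
      rw [hv.eq_of_boundary x hx i hi]
      simpa using hC.abs_rhs_le 0 (by norm_num) i hi x (by rcases hx with rfl | rfl <;> simp))
    (fun x hx i hi => by
      rw [hv.eq_of_mem_Ioo x hx i hi]
      simpa using hC.abs_rhs_le 0 (by norm_num) i hi x (Ioo_subset_Icc_self hx))

theorem abs_sum_lowerOrder_le (hC : IsC2Bound s a f B) {M₀ M₁ : ℝ}
    (h₀ : ∀ x ∈ Icc (0:ℝ) 1, ∀ j ∈ s, |v j x| ≤ M₀)
    (h₁ : ∀ x ∈ Icc (0:ℝ) 1, ∀ j ∈ s, |deriv (v j) x| ≤ M₁)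
    {x : ℝ} (hx : x ∈ Icc (0:ℝ) 1) {i : ι} (hi : i ∈ s) :
    |∑ j ∈ s, (iteratedDeriv 2 (a i j) x * v j x + 2 * (deriv (a i j) x * deriv (v j) x))|
      ≤ s.card * (B * M₀ + 2 * (B * M₁)) := by
  refine abs_sum_le_card_mul fun j hj => (abs_add_le _ _).trans (add_le_add
    (abs_mul_le_of_abs_le (hC.abs_coeff_le 2 le_rfl i hi j hj x hx) (h₀ x hx j hj)) ?_)
  rw [abs_mul, abs_two]
  gcongr
  exact abs_mul_le_of_abs_le (by simpa using hC.abs_coeff_le 1 (by norm_num) i hi j hj x hx)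
    (h₁ x hx j hj)

theorem mul_abs_iteratedDeriv_two_le (hv : IsBVPSolution s ε a f v)
    (ha : IsDominantZMatrix s a α) (hα : 0 ≤ α) (hε : ∀ i ∈ s, 0 < ε i)
    (hC : IsC2Bound s a f B) {M₀ M₁ : ℝ} (h₀ : ∀ x ∈ Icc (0:ℝ) 1, ∀ j ∈ s, |v j x| ≤ M₀)
    (h₁ : ∀ x ∈ Icc (0:ℝ) 1, ∀ j ∈ s, |deriv (v j) x| ≤ M₁) :
    ∀ x ∈ Icc (0:ℝ) 1, ∀ i ∈ s,
      α * |iteratedDeriv 2 (v i) x| ≤ B + s.card * (B * M₀ + 2 * (B * M₁)) := by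
  have hint : ∀ x ∈ Ioo (0:ℝ) 1, ∀ i ∈ s,
      |-ε i * iteratedDeriv 2 (iteratedDeriv 2 (v i)) x
        + ∑ j ∈ s, a i j x * iteratedDeriv 2 (v j) x| ≤ B + s.card * (B * M₀ + 2 * (B * M₁)) := by
    intro x hx i hi
    have hx' := Ioo_subset_Icc_self hx
    rw [iteratedDeriv_iteratedDeriv, neg_mul, hv.mul_iteratedDeriv_four hC hi (hε i hi).ne' hx,
      Finset.sum_add_distrib]
    calc _ = |iteratedDeriv 2 (f i) x - ∑ j ∈ s,
          (iteratedDeriv 2 (a i j) x * v j x + 2 * (deriv (a i j) x * deriv (v j) x))| := by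
          congr 1; ring
      _ ≤ _ := (abs_sub _ _).trans (add_le_add (hC.abs_rhs_le 2 le_rfl i hi x hx')
          (abs_sum_lowerOrder_le hC h₀ h₁ hx' hi))
  refine ha.maximum_principle hα (fun i hi => (hε i hi).le)
    (fun i hi => ((hv.contDiff i hi).continuous_iteratedDeriv 2 (by norm_num)).continuousOn)
    (fun x hx i hi => ?_) hint
  rw [Finset.sum_eq_zero fun j hj => by
    rw [hv.iteratedDeriv_two_eq_zero hC (fun i hi => (hε i hi).ne') x hx j hj, mul_zero],
    abs_zero]
  exact (abs_nonneg _).trans (hint (1 / 2) ⟨by norm_num, by norm_num⟩ i hi)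

theorem abs_deriv_le (hv : IsBVPSolution s ε a f v) (ha : IsDominantZMatrix s a α)
    (hα : 0 < α) (hε : ∀ i ∈ s, 0 < ε i) (hC : IsC2Bound s a f B) {M₀ : ℝ}
    (h₀ : ∀ x ∈ Icc (0:ℝ) 1, ∀ j ∈ s, |v j x| ≤ M₀) :
    ∀ x ∈ Icc (0:ℝ) 1, ∀ i ∈ s, |deriv (v i) x|
      ≤ 2 * (2 * M₀) * max 1 (2 * (2 * s.card * B / α)) + 2 * ((B + s.card * (B * M₀)) / α) := by
  intro x hx i hi
  obtain ⟨x₁, hx₁, i₁, hi₁, hmax⟩ := exists_forall_abs_le_abs ⟨i, hi⟩ fun j hj =>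
    ((hv.contDiff j hj).continuous_deriv (by norm_num)).continuousOn
  have hB : 0 ≤ B := (abs_nonneg _).trans (hC.abs_rhs_le 0 (by norm_num) i hi x hx)
  have hM₀ : 0 ≤ M₀ := (abs_nonneg _).trans (h₀ x hx i hi)
  have h₂ := hv.mul_abs_iteratedDeriv_two_le ha hα.le hε hC h₀ hmax
  have hv₁ := hv.contDiff i₁ hi₁
  refine (hmax x hx i hi).trans (le_of_forall_le_div_add_mul (abs_nonneg _)
    (by positivity) fun t ht => ?_)
  calc |deriv (v i₁) x₁|
      ≤ 2 * M₀ / t + t * ((B + s.card * (B * M₀ + 2 * (B * |deriv (v i₁) x₁|))) / α) :=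
        abs_deriv_le_of_abs_le (hv₁.differentiable (by norm_num))
          (hv₁.continuous_deriv (by norm_num)).continuousOn
          (by simpa [iteratedDeriv_one] using
            (hv₁.differentiable_iteratedDeriv 1 (by norm_num)).differentiableOn)
          (fun y hy => h₀ y hy i₁ hi₁)
          (fun y hy => by
            rw [le_div_iff₀' hα, ← iteratedDeriv_two]
            exact h₂ y (Ioo_subset_Icc_self hy) i₁ hi₁)
          ht hx₁
    _ = _ := by ring

theorem abs_iteratedDeriv_three_le (hv : IsBVPSolution s ε a f v) (hC : IsC2Bound s a f B)
    {M₀ M₁ M₂ : ℝ} (h₀ : ∀ x ∈ Icc (0:ℝ) 1, ∀ j ∈ s, |v j x| ≤ M₀)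
    (h₁ : ∀ x ∈ Icc (0:ℝ) 1, ∀ j ∈ s, |deriv (v j) x| ≤ M₁)
    (h₂ : ∀ x ∈ Icc (0:ℝ) 1, ∀ j ∈ s, |iteratedDeriv 2 (v j) x| ≤ M₂)
    {i : ι} (hi : i ∈ s) (hε₀ : 0 < ε i) (hε₁ : ε i ≤ 1) {x : ℝ} (hx : x ∈ Icc (0:ℝ) 1) :
    |iteratedDeriv 3 (v i) x|
      ≤ (2 * M₂ + (B + s.card * (B * M₀ + 2 * (B * M₁) + B * M₂))) / √(ε i) := by
  set D := B + s.card * (B * M₀ + 2 * (B * M₁) + B * M₂)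
  have hv₃ := hv.contDiff i hi
  have h₄ : ∀ y ∈ Ioo (0:ℝ) 1, |iteratedDeriv 4 (v i) y| ≤ D / ε i := by
    intro y hy
    have hy' := Ioo_subset_Icc_self hy
    rw [le_div_iff₀' hε₀, ← abs_of_pos hε₀, ← abs_mul,
      hv.mul_iteratedDeriv_four hC hi hε₀.ne' hy, Finset.sum_add_distrib]
    refine (abs_sub _ _).trans ?_
    have hQ : |∑ j ∈ s, a i j y * iteratedDeriv 2 (v j) y| ≤ s.card * (B * M₂) :=
      abs_sum_le_card_mul fun j hj =>
        abs_mul_le_of_abs_le (by simpa using hC.abs_coeff_le 0 (by norm_num) i hi j hj y hy')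
          (h₂ y hy' j hj)
    linarith [abs_add_le (∑ j ∈ s, (iteratedDeriv 2 (a i j) y * v j y
        + 2 * (deriv (a i j) y * deriv (v j) y))) (∑ j ∈ s, a i j y * iteratedDeriv 2 (v j) y),
      abs_sum_lowerOrder_le hC h₀ h₁ hy' hi, hC.abs_rhs_le 2 le_rfl i hi y hy']
  have hsqrt : √(ε i) ∈ Ioc (0:ℝ) 1 := ⟨Real.sqrt_pos.mpr hε₀, Real.sqrt_le_one.mpr hε₁⟩
  calc |iteratedDeriv 3 (v i) x| ≤ 2 * M₂ / √(ε i) + √(ε i) * (D / ε i) := by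
        rw [iteratedDeriv_succ]
        refine abs_deriv_le_of_abs_le (hv₃.differentiable_iteratedDeriv 2 (by norm_num))
          (by simpa [← iteratedDeriv_succ] using
            (hv₃.continuous_iteratedDeriv 3 le_rfl).continuousOn)
          (fun y hy => ?_) (fun y hy => h₂ y hy i hi) (fun y hy => ?_) hsqrt hx
        · rw [← iteratedDeriv_succ]
          exact (hv.differentiableAt_iteratedDeriv_three hC hi hε₀.ne' hy).differentiableWithinAt
        · simpa [← iteratedDeriv_succ] using h₄ y hy
    _ = (2 * M₂ + D) / √(ε i) := by
        have := Real.sq_sqrt hε₀.le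
        field_simp
        rw [this]
        ring

end IsBVPSolution

theorem IsDominantZMatrix.exists_bound_iteratedDeriv (ha : IsDominantZMatrix s a α)
    (hα : 0 < α) (hC : IsC2Bound s a f B) :
    ∃ C > 0, ∀ ε : ι → ℝ, (∀ i ∈ s, 0 < ε i) → (∀ i ∈ s, ε i ≤ 1) →
      ∀ v, IsBVPSolution s ε a f v → ∀ k ≤ 3, ∀ i ∈ s, ∀ x ∈ Icc (0:ℝ) 1,
        |iteratedDeriv k (v i) x| ≤ C * (1 + ε i ^ (1 - (k : ℝ) / 2)) := by
  set M₀ := B / α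
  set M₁ := 2 * (2 * M₀) * max 1 (2 * (2 * s.card * B / α)) + 2 * ((B + s.card * (B * M₀)) / α)
  set M₂ := (B + s.card * (B * M₀ + 2 * (B * M₁))) / α
  set M₃ := 2 * M₂ + (B + s.card * (B * M₀ + 2 * (B * M₁) + B * M₂))
  set C := max 1 (max (max M₀ M₁) (max M₂ M₃))
  have hC₁ : 1 ≤ C := le_max_left _ _
  have hM : M₀ ≤ C ∧ M₁ ≤ C ∧ M₂ ≤ C ∧ M₃ ≤ C := by
    refine ⟨?_, ?_, ?_, ?_⟩ <;> exact le_trans (by simp) (le_max_right _ _)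
  refine ⟨C, by linarith, fun ε hε hε₁ v hv k hk i hi x hx => ?_⟩
  have h₀ : ∀ x ∈ Icc (0:ℝ) 1, ∀ j ∈ s, |v j x| ≤ M₀ := fun x hx j hj =>
    (le_div_iff₀' hα).mpr (hv.mul_abs_le ha hα.le (fun i hi => (hε i hi).le) hC x hx j hj)
  have h₁ := hv.abs_deriv_le ha hα hε hC h₀
  have h₂ : ∀ x ∈ Icc (0:ℝ) 1, ∀ j ∈ s, |iteratedDeriv 2 (v j) x| ≤ M₂ := fun x hx j hj =>
    (le_div_iff₀' hα).mpr (hv.mul_abs_iteratedDeriv_two_le ha hα.le hε hC h₀ h₁ x hx j hj)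
  refine abs_le_mul_one_add_rpow (y := fun k => iteratedDeriv k (v i) x) (by linarith)
    (hε i hi) (fun k hk => ?_) ?_ k hk
  · interval_cases k
    · simpa using (h₀ x hx i hi).trans hM.1
    · simpa using (h₁ x hx i hi).trans hM.2.1
    · exact (h₂ x hx i hi).trans hM.2.2.1
  · exact (hv.abs_iteratedDeriv_three_le hC h₀ h₁ h₂ hi (hε i hi) (hε₁ i hi) hx).trans
      (div_le_div_of_nonneg_right hM.2.2.2 (Real.sqrt_nonneg _))

end Solution

theorem stmt4_general
    (n : ℕ)
    (A : ℝ → ℕ → ℕ → ℝ)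
    (hAsm : ∀ i j, 1 ≤ i → i ≤ n → 1 ≤ j → j ≤ n → ContDiff ℝ 3 (fun x => A x i j))
    (hAoff : ∀ x ∈ Set.Icc (0:ℝ) 1, ∀ i j, 1 ≤ i → i ≤ n → 1 ≤ j → j ≤ n → i ≠ j → A x i j ≤ 0)
    (α : ℝ) (hα0 : 0 < α)
    (hα : ∀ x ∈ Set.Icc (0:ℝ) 1, ∀ i, 1 ≤ i → i ≤ n → α < ∑ j ∈ Finset.Icc 1 n, A x i j)
    (f : ℝ → ℕ → ℝ)
    (hf : ∀ i, 1 ≤ i → i ≤ n → ContDiff ℝ 3 (fun t => f t i)) :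
    ∃ C > 0,
      ∀ ε : ℕ → ℝ,
      (∀ i, 1 ≤ i → i ≤ n → 0 < ε i) →
      (∀ i, 1 ≤ i → i ≤ n → ε i ≤ 1) →
      (∀ i j, 1 ≤ i → i < j → j ≤ n → ε i < ε j) →
      (∀ i, 1 ≤ i → i ≤ n → Real.sqrt (ε i) ≤ Real.sqrt α / 4) →
      ∀ v : ℝ → ℕ → ℝ,
      (∀ i, 1 ≤ i → i ≤ n → ContDiff ℝ 3 (fun t => v t i)) →
      (∀ y ∈ Set.Ioo (0:ℝ) 1, ∀ i, 1 ≤ i → i ≤ n → Lop n ε A v y i = f y i) →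
      (∀ i, 1 ≤ i → i ≤ n → ∑ j ∈ Finset.Icc 1 n, A 0 i j * v 0 j = f 0 i) →
      (∀ i, 1 ≤ i → i ≤ n → ∑ j ∈ Finset.Icc 1 n, A 1 i j * v 1 j = f 1 i) →
      ∀ k : ℕ, k ≤ 3 → ∀ i, 1 ≤ i → i ≤ n → ∀ x ∈ Set.Icc (0:ℝ) 1,
        |iteratedDeriv k (fun t => v t i) x| ≤ C * (1 + ε i ^ (1 - (k : ℝ) / 2)) := by
  have hmem {i : ℕ} : i ∈ Finset.Icc 1 n ↔ 1 ≤ i ∧ i ≤ n := Finset.mem_Icc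
  obtain ⟨B, hC⟩ := exists_isC2Bound (s := Finset.Icc 1 n) (a := fun i j x => A x i j)
    (f := fun i x => f x i)
    (fun i hi j hj => (hAsm i j (hmem.mp hi).1 (hmem.mp hi).2 (hmem.mp hj).1 (hmem.mp hj).2).of_le
      (by norm_num))
    (fun i hi => (hf i (hmem.mp hi).1 (hmem.mp hi).2).of_le (by norm_num))
  have ha : IsDominantZMatrix (Finset.Icc 1 n) (fun i j x => A x i j) α :=
    { offDiag_nonpos := fun x hx i hi j hj hji => hAoff x hx i j (hmem.mp hi).1 (hmem.mp hi).2
        (hmem.mp hj).1 (hmem.mp hj).2 hji.symm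
      le_rowSum := fun x hx i hi => (hα x hx i (hmem.mp hi).1 (hmem.mp hi).2).le }
  obtain ⟨C, hC₀, hbound⟩ := ha.exists_bound_iteratedDeriv hα0 hC
  refine ⟨C, hC₀, fun ε hε₀ hε₁ _ _ v hv hLv hb₀ hb₁ k hk i hi₁ hin x hx => ?_⟩
  refine hbound ε (fun i hi => hε₀ i (hmem.mp hi).1 (hmem.mp hi).2)
    (fun i hi => hε₁ i (hmem.mp hi).1 (hmem.mp hi).2) (fun i t => v t i)
    ⟨fun i hi => hv i (hmem.mp hi).1 (hmem.mp hi).2,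
      fun y hy i hi => hLv y hy i (hmem.mp hi).1 (hmem.mp hi).2, ?_⟩
    k hk i (hmem.mpr ⟨hi₁, hin⟩) x hx
  rintro y (rfl | rfl) i hi
  · exact hb₀ i (hmem.mp hi).1 (hmem.mp hi).2
  · exact hb₁ i (hmem.mp hi).1 (hmem.mp hi).2

theorem stmt4
    (n : ℕ) (hn : 1 ≤ n)
    (A : ℝ → ℕ → ℕ → ℝ)
    (hAc : ∀ i j, 1 ≤ i → i ≤ n → 1 ≤ j → j ≤ n →
      ContinuousOn (fun x => A x i j) (Set.Icc 0 1))
    (hAsm : ∀ i j, 1 ≤ i → i ≤ n → 1 ≤ j → j ≤ n → ContDiff ℝ 3 (fun x => A x i j))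
    (hAdiag : ∀ x ∈ Set.Icc (0:ℝ) 1, ∀ i, 1 ≤ i → i ≤ n →
      ∑ j ∈ (Finset.Icc 1 n).erase i, |A x i j| < A x i i)
    (hAoff : ∀ x ∈ Set.Icc (0:ℝ) 1, ∀ i j, 1 ≤ i → i ≤ n → 1 ≤ j → j ≤ n → i ≠ j → A x i j ≤ 0)
    (α : ℝ) (hα0 : 0 < α)
    (hα : ∀ x ∈ Set.Icc (0:ℝ) 1, ∀ i, 1 ≤ i → i ≤ n → α < ∑ j ∈ Finset.Icc 1 n, A x i j)
    (f : ℝ → ℕ → ℝ)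
    (hf : ∀ i, 1 ≤ i → i ≤ n → ContDiff ℝ 3 (fun t => f t i)) :
    ∃ C > 0,
      ∀ ε : ℕ → ℝ,
      (∀ i, 1 ≤ i → i ≤ n → 0 < ε i) →
      (∀ i, 1 ≤ i → i ≤ n → ε i ≤ 1) →
      (∀ i j, 1 ≤ i → i < j → j ≤ n → ε i < ε j) →
      (∀ i, 1 ≤ i → i ≤ n → Real.sqrt (ε i) ≤ Real.sqrt α / 4) →
      ∀ v : ℝ → ℕ → ℝ,
      (∀ i, 1 ≤ i → i ≤ n → ContDiff ℝ 3 (fun t => v t i)) →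
      (∀ y ∈ Set.Ioo (0:ℝ) 1, ∀ i, 1 ≤ i → i ≤ n → Lop n ε A v y i = f y i) →
      (∀ i, 1 ≤ i → i ≤ n → ∑ j ∈ Finset.Icc 1 n, A 0 i j * v 0 j = f 0 i) →
      (∀ i, 1 ≤ i → i ≤ n → ∑ j ∈ Finset.Icc 1 n, A 1 i j * v 1 j = f 1 i) →
      ∀ k : ℕ, k ≤ 3 → ∀ i, 1 ≤ i → i ≤ n → ∀ x ∈ Set.Icc (0:ℝ) 1,
        |iteratedDeriv k (fun t => v t i) x| ≤ C * (1 + ε i ^ (1 - (k : ℝ) / 2)) :=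
  stmt4_general n A hAsm hAoff α hα0 hα f hf
end

section
/- Assume √ε_i ≤ √ε_j/2 and √ε_j ≤ √α/4. Then there exists a unique point x_{i,j} ∈ (0,1] with B^l_i(x_{i,j})/√ε_i = B^l_j(x_{i,j})/√ε_j; it is given explicitly by x_{i,j} = ln(√ε_j/√ε_i) / (√α·(1/√ε_i − 1/√ε_j)); it satisfies x_{i,j} ≤ 1/2; and moreover B^l_i(x)/√ε_i > B^l_j(x)/√ε_j for all x ∈ [0, x_{i,j}), while B^l_i(x)/√ε_i < B^l_j(x)/√ε_j for all x ∈ (x_{i,j}, 1]. -/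
/-!
Taking logarithms, `log (Bl α ei x / √ei) - log (Bl α ej x / √ej) = log (√ej / √ei) - x D` with
`D = √α (1/√ei - 1/√ej) > 0`, an affine function of `x` that vanishes exactly at `xpt α ei ej`
and changes sign there. Since `log t ≤ t - 1`, the root satisfies `xpt ≤ (√ej/√ei - 1) / D = √ej / √α`,
which is at most `1/4` when `√ej ≤ √α / 4`.
-/

open Real

noncomputable def Bl (α e x : ℝ) : ℝ := Real.exp (-x * Real.sqrt (α / e))

noncomputable def xpt (α ei ej : ℝ) : ℝ :=
  Real.log (Real.sqrt ej / Real.sqrt ei) / (Real.sqrt α * (1 / Real.sqrt ei - 1 / Real.sqrt ej))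

lemma Bl_div_sqrt_pos (α x : ℝ) {e : ℝ} (he : 0 < e) : 0 < Bl α e x / √e :=
  div_pos (exp_pos _) (sqrt_pos.2 he)

lemma log_Bl_div_sqrt_sub (x : ℝ) {α ei ej : ℝ} (hα : 0 ≤ α) (hi : 0 < ei) (hj : 0 < ej) :
    log (Bl α ei x / √ei) - log (Bl α ej x / √ej) =
      log (√ej / √ei) - x * (√α * (1 / √ei - 1 / √ej)) := by
  have ha := (sqrt_pos.2 hi).ne'
  have hb := (sqrt_pos.2 hj).ne'
  rw [Bl, Bl, log_div (exp_ne_zero _) ha, log_div (exp_ne_zero _) hb, log_exp, log_exp,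
    sqrt_div hα, sqrt_div hα, log_div hb ha]
  field_simp
  ring

lemma Bl_div_sqrt_lt_iff (x : ℝ) {α ei ej : ℝ} (hα : 0 ≤ α) (hi : 0 < ei) (hj : 0 < ej) :
    Bl α ei x / √ei < Bl α ej x / √ej ↔ log (√ej / √ei) < x * (√α * (1 / √ei - 1 / √ej)) := by
  rw [← log_lt_log_iff (Bl_div_sqrt_pos α x hi) (Bl_div_sqrt_pos α x hj), ← sub_neg,
    log_Bl_div_sqrt_sub x hα hi hj, sub_neg]

section Crossing

variable {α ei ej : ℝ} (hα : 0 < α) (hi : 0 < ei) (hij : ei < ej)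
include hα hi hij

lemma xpt_denom_pos : 0 < √α * (1 / √ei - 1 / √ej) :=
  mul_pos (sqrt_pos.2 hα) (sub_pos.2 (one_div_lt_one_div_of_lt (sqrt_pos.2 hi)
    (sqrt_lt_sqrt hi.le hij)))

lemma xpt_pos : 0 < xpt α ei ej := by
  have ha := sqrt_pos.2 hi
  refine div_pos (log_pos ?_) (xpt_denom_pos hα hi hij)
  rw [one_lt_div ha]
  exact sqrt_lt_sqrt hi.le hij

lemma xpt_le_sqrt_div_sqrt : xpt α ei ej ≤ √ej / √α := by
  have ha := sqrt_pos.2 hi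
  have hs := sqrt_pos.2 hα
  have hab : √ei < √ej := sqrt_lt_sqrt hi.le hij
  have hb := ha.trans hab
  calc xpt α ei ej ≤ (√ej / √ei - 1) / (√α * (1 / √ei - 1 / √ej)) :=
        div_le_div_of_nonneg_right (log_le_sub_one_of_pos (by positivity))
          (xpt_denom_pos hα hi hij).le
    _ = √ej / √α := by
        have : √ej - √ei ≠ 0 := (sub_pos.2 hab).ne'
        field_simp

lemma xpt_lt_iff (x : ℝ) : xpt α ei ej < x ↔ Bl α ei x / √ei < Bl α ej x / √ej := by
  rw [Bl_div_sqrt_lt_iff x hα.le hi (hi.trans hij), xpt, div_lt_iff₀ (xpt_denom_pos hα hi hij)]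

lemma lt_xpt_iff (x : ℝ) : x < xpt α ei ej ↔ Bl α ej x / √ej < Bl α ei x / √ei := by
  rw [xpt, lt_div_iff₀ (xpt_denom_pos hα hi hij), ← sub_pos, ← log_Bl_div_sqrt_sub x hα.le hi
    (hi.trans hij), sub_pos, log_lt_log_iff (Bl_div_sqrt_pos α x (hi.trans hij))
    (Bl_div_sqrt_pos α x hi)]

lemma Bl_div_sqrt_eq_iff (x : ℝ) :
    Bl α ei x / √ei = Bl α ej x / √ej ↔ x = xpt α ei ej := by
  rw [← not_iff_not, ← Ne, ← Ne, ne_iff_lt_or_gt, ne_iff_lt_or_gt, lt_xpt_iff hα hi hij,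
    xpt_lt_iff hα hi hij, or_comm]

end Crossing

theorem stmt6_general
    (α ei ej : ℝ) (hα : 0 < α) (hi : 0 < ei) (hij : ei < ej)
    (hsmall : Real.sqrt ej ≤ Real.sqrt α / 4) :
    xpt α ei ej ∈ Set.Ioc (0:ℝ) 1 ∧
    (∀ x ∈ Set.Ioc (0:ℝ) 1,
      (Bl α ei x / Real.sqrt ei = Bl α ej x / Real.sqrt ej ↔ x = xpt α ei ej)) ∧
    xpt α ei ej ≤ 1 / 2 ∧
    (∀ x ∈ Set.Ico (0:ℝ) (xpt α ei ej), Bl α ej x / Real.sqrt ej < Bl α ei x / Real.sqrt ei) ∧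
    (∀ x ∈ Set.Ioc (xpt α ei ej) 1, Bl α ei x / Real.sqrt ei < Bl α ej x / Real.sqrt ej) := by
  have hquarter : xpt α ei ej ≤ 1 / 4 := by
    calc xpt α ei ej ≤ √ej / √α := xpt_le_sqrt_div_sqrt hα hi hij
      _ ≤ 1 / 4 := by rw [div_le_iff₀ (sqrt_pos.2 hα)]; linarith
  refine ⟨⟨xpt_pos hα hi hij, by linarith⟩, fun x _ ↦ Bl_div_sqrt_eq_iff hα hi hij x, by linarith,
    fun x hx ↦ (lt_xpt_iff hα hi hij x).1 hx.2, fun x hx ↦ (xpt_lt_iff hα hi hij x).1 hx.1⟩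

theorem stmt6
    (α ei ej : ℝ) (hα : 0 < α) (hi : 0 < ei) (hij : ei < ej)
    (hhalf : Real.sqrt ei ≤ Real.sqrt ej / 2)
    (hsmall : Real.sqrt ej ≤ Real.sqrt α / 4) :
    xpt α ei ej ∈ Set.Ioc (0:ℝ) 1 ∧
    (∀ x ∈ Set.Ioc (0:ℝ) 1,
      (Bl α ei x / Real.sqrt ei = Bl α ej x / Real.sqrt ej ↔ x = xpt α ei ej)) ∧
    xpt α ei ej ≤ 1 / 2 ∧
    (∀ x ∈ Set.Ico (0:ℝ) (xpt α ei ej), Bl α ej x / Real.sqrt ej < Bl α ei x / Real.sqrt ei) ∧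
    (∀ x ∈ Set.Ioc (xpt α ei ej) 1, Bl α ei x / Real.sqrt ei < Bl α ej x / Real.sqrt ej) :=
  stmt6_general α ei ej hα hi hij hsmall
end

section
/- Let 0 < ε_1 < ε_2 < … < ε_n. Then the points x_{i,j} satisfy the ordering: x_{i,j} < x_{i+1,j} whenever 1 ≤ i and i+1 < j ≤ n, and x_{i,j} < x_{i,j+1} whenever 1 ≤ i < j and j+1 ≤ n. -/
/-!
In the variable `t = 1 / √ε`, the crossing point `x_{i,j}` is, up to the factor `1 / √α`, the
slope of the secant of `log` between `t_j` and `t_i`. Since `log` is strictly concave, such a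
slope strictly decreases when either endpoint increases, and `t` strictly decreases in `ε`.
-/

open Real

theorem StrictConcaveOn.slope_lt_slope_of_lt {𝕜 : Type*} [Field 𝕜] [LinearOrder 𝕜]
    [IsStrictOrderedRing 𝕜] {s : Set 𝕜} {f : 𝕜 → 𝕜} (hf : StrictConcaveOn 𝕜 s f) {a x y : 𝕜}
    (ha : a ∈ s) (hx : x ∈ s) (hy : y ∈ s) (hxa : x ≠ a) (hya : y ≠ a) (hxy : x < y) :
    slope f a y < slope f a x := by
  simpa only [slope_def_field] using hf.secant_strict_mono ha hx hy hxa hya hxy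

theorem xpt_eq_slope_log (α : ℝ) {u v : ℝ} (hu : 0 < u) (hv : 0 < v) :
    xpt α u v = slope log (1 / √v) (1 / √u) / √α := by
  have hsu : √u ≠ 0 := (sqrt_pos.2 hu).ne'
  have hsv : √v ≠ 0 := (sqrt_pos.2 hv).ne'
  rw [xpt, slope_def_field, log_div hsv hsu, one_div, one_div, log_inv, log_inv, div_div,
    mul_comm √α]
  ring_nf

theorem one_div_sqrt_lt_one_div_sqrt {u v : ℝ} (hu : 0 < u) (huv : u < v) :
    1 / √v < 1 / √u :=
  one_div_lt_one_div_of_lt (sqrt_pos.2 hu) (sqrt_lt_sqrt hu.le huv)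

theorem xpt_lt_xpt_of_lt_left {α u u' v : ℝ} (hα : 0 < α) (hu : 0 < u) (huu' : u < u')
    (hu'v : u' < v) : xpt α u v < xpt α u' v := by
  have hu' : 0 < u' := hu.trans huu'
  have hv : 0 < v := hu'.trans hu'v
  rw [xpt_eq_slope_log α hu hv, xpt_eq_slope_log α hu' hv]
  gcongr ?_ / _
  have hvu' := one_div_sqrt_lt_one_div_sqrt hu' hu'v
  have hu'u := one_div_sqrt_lt_one_div_sqrt hu huu'
  exact strictConcaveOn_log_Ioi.slope_lt_slope_of_lt
    (Set.mem_Ioi.2 (by positivity)) (Set.mem_Ioi.2 (by positivity)) (Set.mem_Ioi.2 (by positivity))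
    hvu'.ne' (hvu'.trans hu'u).ne' hu'u

theorem xpt_lt_xpt_of_lt_right {α u v v' : ℝ} (hα : 0 < α) (hu : 0 < u) (huv : u < v)
    (hvv' : v < v') : xpt α u v < xpt α u v' := by
  have hv : 0 < v := hu.trans huv
  have hv' : 0 < v' := hv.trans hvv'
  rw [xpt_eq_slope_log α hu hv, xpt_eq_slope_log α hu hv', slope_comm, slope_comm _ (1 / √v')]
  gcongr ?_ / _
  have hvu := one_div_sqrt_lt_one_div_sqrt hu huv
  have hv'v := one_div_sqrt_lt_one_div_sqrt hv hvv'
  exact strictConcaveOn_log_Ioi.slope_lt_slope_of_lt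
    (Set.mem_Ioi.2 (by positivity)) (Set.mem_Ioi.2 (by positivity)) (Set.mem_Ioi.2 (by positivity))
    (hv'v.trans hvu).ne hvu.ne hv'v

theorem stmt7
    (α : ℝ) (hα : 0 < α) (n : ℕ)
    (ε : ℕ → ℝ) (hε0 : ∀ i, 1 ≤ i → i ≤ n → 0 < ε i)
    (hεm : ∀ i j, 1 ≤ i → i < j → j ≤ n → ε i < ε j) :
    (∀ i j, 1 ≤ i → i + 1 < j → j ≤ n →
      xpt α (ε i) (ε j) < xpt α (ε (i+1)) (ε j)) ∧
    (∀ i j, 1 ≤ i → i < j → j + 1 ≤ n →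
      xpt α (ε i) (ε j) < xpt α (ε i) (ε (j+1))) := by
  refine ⟨fun i j hi hij hj => ?_, fun i j hi hij hj => ?_⟩
  · exact xpt_lt_xpt_of_lt_left hα (hε0 i hi (by omega))
      (hεm i (i + 1) hi (by omega) (by omega)) (hεm (i + 1) j (by omega) hij hj)
  · exact xpt_lt_xpt_of_lt_right hα (hε0 i hi (by omega))
      (hεm i j hi hij (by omega)) (hεm j (j + 1) (by omega) (by omega) hj)
end

section
/- Let 0 = x_0 < x_1 < … < x_N = 1 be arbitrary mesh points and let Ψ : {x_0, …, x_N} → ℝⁿ be a mesh function with Ψ(x_0) ≥ 0, Ψ(x_N) ≥ 0 and (L^N Ψ)(x_j) ≥ 0 (componentwise) for all 1 ≤ j ≤ N−1. Then Ψ(x_j) ≥ 0 for all 0 ≤ j ≤ N. -/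
noncomputable def d2m (x : ℕ → ℝ) (Ψ : ℕ → ℕ → ℝ) (j i : ℕ) : ℝ :=
  ((Ψ (j+1) i - Ψ j i) / (x (j+1) - x j) - (Ψ j i - Ψ (j-1) i) / (x j - x (j-1)))
    / (((x j - x (j-1)) + (x (j+1) - x j)) / 2)

noncomputable def LN (n : ℕ) (ε : ℕ → ℝ) (A : ℝ → ℕ → ℕ → ℝ) (x : ℕ → ℝ)
    (Ψ : ℕ → ℕ → ℝ) (j i : ℕ) : ℝ :=
  -(ε i) * d2m x Ψ j i + ∑ k ∈ Finset.Icc 1 n, A (x j) i k * Ψ j k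

/-!
Discrete minimum principle. Take the most negative value `Ψ J I` over all mesh points and
components. It cannot sit on the boundary, and at an interior mesh point the minimality makes the
second difference `δ²Ψ_I(x_J)` nonnegative, while the sign pattern of `A` bounds the coupling term
by the row sum of `A` times `Ψ J I`, which is negative. Hence `(L^N Ψ)_I(x_J) < 0`.
-/

open Finset

lemma mesh_mem_Icc {N : ℕ} {x : ℕ → ℝ} (hx0 : x 0 = 0) (hxN : x N = 1)
    (hxm : ∀ j, j < N → x j < x (j + 1)) {j : ℕ} (hj : j ≤ N) : x j ∈ Set.Icc (0 : ℝ) 1 := by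
  have hmono : MonotoneOn x (Set.Iic N) :=
    (strictMonoOn_Iic_of_lt_succ (ψ := x) fun m hm => by simpa using hxm m hm).monotoneOn
  constructor
  · simpa [hx0] using hmono (Set.mem_Iic.2 (Nat.zero_le N)) (Set.mem_Iic.2 hj) (Nat.zero_le j)
  · simpa [hxN] using hmono (Set.mem_Iic.2 hj) (Set.mem_Iic.2 le_rfl) hj

lemma d2m_nonneg_of_le_neighbours {x : ℕ → ℝ} {Ψ : ℕ → ℕ → ℝ} {j i : ℕ}
    (hxl : x (j - 1) < x j) (hxr : x j < x (j + 1))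
    (hl : Ψ j i ≤ Ψ (j - 1) i) (hr : Ψ j i ≤ Ψ (j + 1) i) : 0 ≤ d2m x Ψ j i := by
  have hforward : 0 ≤ (Ψ (j + 1) i - Ψ j i) / (x (j + 1) - x j) :=
    div_nonneg (by linarith) (by linarith)
  have hbackward : (Ψ j i - Ψ (j - 1) i) / (x j - x (j - 1)) ≤ 0 :=
    div_nonpos_of_nonpos_of_nonneg (by linarith) (by linarith)
  unfold d2m
  exact div_nonneg (by linarith) (by linarith)

lemma sum_mul_le_sum_mul_at_min {ι : Type*} {s : Finset ι} {a ψ : ι → ℝ} {i : ι}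
    (hoff : ∀ k ∈ s, k ≠ i → a k ≤ 0) (hmin : ∀ k ∈ s, ψ i ≤ ψ k) :
    ∑ k ∈ s, a k * ψ k ≤ (∑ k ∈ s, a k) * ψ i := by
  rw [Finset.sum_mul]
  refine Finset.sum_le_sum fun k hk => ?_
  by_cases hki : k = i
  · rw [hki]
  · exact mul_le_mul_of_nonpos_left (hmin k hk) (hoff k hk hki)

lemma LN_neg_at_negative_min {n : ℕ} {ε : ℕ → ℝ} {A : ℝ → ℕ → ℕ → ℝ} {x : ℕ → ℝ}
    {Ψ : ℕ → ℕ → ℝ} {J I : ℕ} (hεI : 0 < ε I)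
    (hoff : ∀ k ∈ Icc 1 n, k ≠ I → A (x J) I k ≤ 0)
    (hrowsum : 0 < ∑ k ∈ Icc 1 n, A (x J) I k)
    (hxl : x (J - 1) < x J) (hxr : x J < x (J + 1))
    (hl : Ψ J I ≤ Ψ (J - 1) I) (hr : Ψ J I ≤ Ψ (J + 1) I)
    (hcomp : ∀ k ∈ Icc 1 n, Ψ J I ≤ Ψ J k) (hneg : Ψ J I < 0) :
    LN n ε A x Ψ J I < 0 := by
  have hd2 : 0 ≤ d2m x Ψ J I := d2m_nonneg_of_le_neighbours hxl hxr hl hr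
  have hcoupling := sum_mul_le_sum_mul_at_min hoff hcomp
  have hrow : (∑ k ∈ Icc 1 n, A (x J) I k) * Ψ J I < 0 := mul_neg_of_pos_of_neg hrowsum hneg
  unfold LN
  linarith [mul_nonneg hεI.le hd2]

theorem stmt8_general
    (n : ℕ)
    (ε : ℕ → ℝ) (hε0 : ∀ i, 1 ≤ i → i ≤ n → 0 < ε i)
    (A : ℝ → ℕ → ℕ → ℝ)
    (hAoff : ∀ x ∈ Set.Icc (0:ℝ) 1, ∀ i j, 1 ≤ i → i ≤ n → 1 ≤ j → j ≤ n → i ≠ j → A x i j ≤ 0)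
    (α : ℝ) (hα0 : 0 < α)
    (hα : ∀ x ∈ Set.Icc (0:ℝ) 1, ∀ i, 1 ≤ i → i ≤ n → α < ∑ j ∈ Finset.Icc 1 n, A x i j)
    (N : ℕ) (x : ℕ → ℝ)
    (hx0 : x 0 = 0) (hxN : x N = 1) (hxm : ∀ j, j < N → x j < x (j+1))

    (Ψ : ℕ → ℕ → ℝ)
    (hΨ0 : ∀ i, 1 ≤ i → i ≤ n → 0 ≤ Ψ 0 i)
    (hΨN : ∀ i, 1 ≤ i → i ≤ n → 0 ≤ Ψ N i)
    (hLΨ : ∀ j, 1 ≤ j → j ≤ N - 1 → ∀ i, 1 ≤ i → i ≤ n → 0 ≤ LN n ε A x Ψ j i) :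
    ∀ j ≤ N, ∀ i, 1 ≤ i → i ≤ n → 0 ≤ Ψ j i := by
  intro j hj i hi1 hi2
  have hji : (j, i) ∈ Icc 0 N ×ˢ Icc 1 n := by simp [hj, hi1, hi2]
  obtain ⟨⟨J, I⟩, hJI, hmin⟩ := exists_min_image _ (fun q => Ψ q.1 q.2) ⟨_, hji⟩
  replace hmin : ∀ a ≤ N, ∀ k ∈ Icc 1 n, Ψ J I ≤ Ψ a k := fun a ha k hk =>
    hmin (a, k) (mem_product.2 ⟨mem_Icc.2 ⟨a.zero_le, ha⟩, hk⟩)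
  obtain ⟨hJN, hI⟩ : J ≤ N ∧ I ∈ Icc 1 n := by simpa using hJI
  obtain ⟨hI1, hIn⟩ := mem_Icc.1 hI
  refine (hmin j hj i (mem_Icc.2 ⟨hi1, hi2⟩)).trans' ?_
  by_contra! hneg
  have hJ0 : J ≠ 0 := by rintro rfl; exact (hΨ0 I hI1 hIn).not_gt hneg
  have hJN' : J ≠ N := by rintro rfl; exact (hΨN I hI1 hIn).not_gt hneg
  have hxJ := mesh_mem_Icc hx0 hxN hxm hJN
  have hxl : x (J - 1) < x J := by
    simpa [Nat.sub_add_cancel (Nat.one_le_iff_ne_zero.2 hJ0)] using hxm (J - 1) (by omega)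
  have hoff : ∀ k ∈ Icc 1 n, k ≠ I → A (x J) I k ≤ 0 := fun k hk hkI =>
    hAoff _ hxJ I k hI1 hIn (mem_Icc.1 hk).1 (mem_Icc.1 hk).2 (Ne.symm hkI)
  have hLneg : LN n ε A x Ψ J I < 0 :=
    LN_neg_at_negative_min (hε0 I hI1 hIn) hoff (hα0.trans (hα _ hxJ I hI1 hIn)) hxl
      (hxm J (by omega)) (hmin _ (by omega) I hI) (hmin _ (by omega) I hI) (hmin J hJN) hneg
  exact hLneg.not_ge (hLΨ J (by omega) (by omega) I hI1 hIn)

theorem stmt8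
    (n : ℕ) (hn : 1 ≤ n)
    (ε : ℕ → ℝ) (hε0 : ∀ i, 1 ≤ i → i ≤ n → 0 < ε i)
    (hε1 : ∀ i, 1 ≤ i → i ≤ n → ε i ≤ 1)
    (hεm : ∀ i j, 1 ≤ i → i < j → j ≤ n → ε i < ε j)
    (A : ℝ → ℕ → ℕ → ℝ)
    (hAc : ∀ i j, 1 ≤ i → i ≤ n → 1 ≤ j → j ≤ n →
      ContinuousOn (fun x => A x i j) (Set.Icc 0 1))
    (hAdiag : ∀ x ∈ Set.Icc (0:ℝ) 1, ∀ i, 1 ≤ i → i ≤ n →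
      ∑ j ∈ (Finset.Icc 1 n).erase i, |A x i j| < A x i i)
    (hAoff : ∀ x ∈ Set.Icc (0:ℝ) 1, ∀ i j, 1 ≤ i → i ≤ n → 1 ≤ j → j ≤ n → i ≠ j → A x i j ≤ 0)
    (α : ℝ) (hα0 : 0 < α)
    (hα : ∀ x ∈ Set.Icc (0:ℝ) 1, ∀ i, 1 ≤ i → i ≤ n → α < ∑ j ∈ Finset.Icc 1 n, A x i j)
    (N : ℕ) (x : ℕ → ℝ)
    (hx0 : x 0 = 0) (hxN : x N = 1) (hxm : ∀ j, j < N → x j < x (j+1))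

    (Ψ : ℕ → ℕ → ℝ)
    (hΨ0 : ∀ i, 1 ≤ i → i ≤ n → 0 ≤ Ψ 0 i)
    (hΨN : ∀ i, 1 ≤ i → i ≤ n → 0 ≤ Ψ N i)
    (hLΨ : ∀ j, 1 ≤ j → j ≤ N - 1 → ∀ i, 1 ≤ i → i ≤ n → 0 ≤ LN n ε A x Ψ j i) :
    ∀ j ≤ N, ∀ i, 1 ≤ i → i ≤ n → 0 ≤ Ψ j i :=
  stmt8_general n ε hε0 A hAoff α hα0 hα N x hx0 hxN hxm Ψ hΨ0 hΨN hLΨ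
end

section
/- Let 0 = x_0 < x_1 < … < x_N = 1 be arbitrary mesh points and let Ψ : {x_0, …, x_N} → ℝⁿ be any mesh function. Then for all 0 ≤ j ≤ N: ‖Ψ(x_j)‖ ≤ max{ ‖Ψ(x_0)‖, ‖Ψ(x_N)‖, (1/α)·max_{1≤j≤N−1} ‖(L^N Ψ)(x_j)‖ }. -/
lemma vnorm_ge' (n : ℕ) (V : ℕ → ℝ) {i : ℕ} (h : i ∈ Finset.Icc 1 n) :
    |V i| ≤ vnorm n V := by
  have hC : ∀ j, (⨆ _ : j ∈ Finset.Icc 1 n, |V j|) ≤ ∑ k ∈ Finset.Icc 1 n, |V k| := by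
    intro j
    by_cases hj : j ∈ Finset.Icc 1 n
    · rw [ciSup_pos hj]
      exact Finset.single_le_sum (f := fun k => |V k|) (fun k _ => abs_nonneg _) hj
    · haveI : IsEmpty (j ∈ Finset.Icc 1 n) := isEmpty_Prop.2 hj
      rw [Real.iSup_of_isEmpty]
      exact Finset.sum_nonneg fun k _ => abs_nonneg _
  have hbdd : BddAbove (Set.range fun j => ⨆ _ : j ∈ Finset.Icc 1 n, |V j|) :=
    ⟨_, Set.forall_mem_range.2 hC⟩
  have := le_ciSup hbdd i
  rwa [ciSup_pos h] at this

theorem stmt9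
    (n : ℕ) (hn : 1 ≤ n)
    (ε : ℕ → ℝ) (hε0 : ∀ i, 1 ≤ i → i ≤ n → 0 < ε i)
    (hε1 : ∀ i, 1 ≤ i → i ≤ n → ε i ≤ 1)
    (hεm : ∀ i j, 1 ≤ i → i < j → j ≤ n → ε i < ε j)
    (A : ℝ → ℕ → ℕ → ℝ)
    (hAc : ∀ i j, 1 ≤ i → i ≤ n → 1 ≤ j → j ≤ n →
      ContinuousOn (fun x => A x i j) (Set.Icc 0 1))
    (hAdiag : ∀ x ∈ Set.Icc (0:ℝ) 1, ∀ i, 1 ≤ i → i ≤ n →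
      ∑ j ∈ (Finset.Icc 1 n).erase i, |A x i j| < A x i i)
    (hAoff : ∀ x ∈ Set.Icc (0:ℝ) 1, ∀ i j, 1 ≤ i → i ≤ n → 1 ≤ j → j ≤ n → i ≠ j → A x i j ≤ 0)
    (α : ℝ) (hα0 : 0 < α)
    (hα : ∀ x ∈ Set.Icc (0:ℝ) 1, ∀ i, 1 ≤ i → i ≤ n → α < ∑ j ∈ Finset.Icc 1 n, A x i j)
    (N : ℕ) (x : ℕ → ℝ)
    (hx0 : x 0 = 0) (hxN : x N = 1) (hxm : ∀ j, j < N → x j < x (j+1))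
    (Ψ : ℕ → ℕ → ℝ) (M : ℝ)
    (hM : ∀ j, 1 ≤ j → j ≤ N - 1 → ∀ i, 1 ≤ i → i ≤ n → |LN n ε A x Ψ j i| ≤ M) :
    ∀ j ≤ N, ∀ i, 1 ≤ i → i ≤ n →
      |Ψ j i| ≤ max (max (vnorm n (Ψ 0)) (vnorm n (Ψ N))) ((1 / α) * M) := by
  -- monotonicity of the mesh
  have hxle : ∀ a b, a ≤ b → b ≤ N → x a ≤ x b := by
    intro a b
    induction b with
    | zero => intro hab _; exact le_of_eq (congrArg x (by omega))
    | succ k ih =>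
      intro hab hbN
      rcases Nat.lt_or_ge a (k+1) with h | h
      · exact (ih (by omega) (by omega)).trans (hxm k (by omega)).le
      · have : a = k + 1 := by omega
        subst this; exact le_rfl
  -- maximizing pair
  set S := Finset.range (N+1) ×ˢ Finset.Icc 1 n with hS
  have hne : S.Nonempty := ⟨(0, 1), by simp [hS, hn]⟩
  obtain ⟨p, hpS, hpmax⟩ := S.exists_max_image (fun q => |Ψ q.1 q.2|) hne
  rw [hS, Finset.mem_product, Finset.mem_range, Finset.mem_Icc] at hpS
  obtain ⟨hp1, hp2a, hp2b⟩ := hpS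
  set m := |Ψ p.1 p.2| with hm
  have hm0 : 0 ≤ m := abs_nonneg _
  have hmax : ∀ j ≤ N, ∀ k, 1 ≤ k → k ≤ n → |Ψ j k| ≤ m := by
    intro j hj k hk1 hk2
    exact hpmax (j, k) (by simp [hS, Finset.mem_product, Nat.lt_succ_of_le hj, hk1, hk2])
  -- reduce to bounding m
  suffices hkey : m ≤ max (max (vnorm n (Ψ 0)) (vnorm n (Ψ N))) ((1 / α) * M) by
    intro j hj i hi1 hi2
    exact (hmax j hj i hi1 hi2).trans hkey
  set j₀ := p.1
  set i₀ := p.2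
  have hi₀ : i₀ ∈ Finset.Icc 1 n := Finset.mem_Icc.2 ⟨hp2a, hp2b⟩
  by_cases hj0 : j₀ = 0
  · have : m = |Ψ 0 i₀| := by rw [hm, hj0]
    rw [this]
    exact le_max_of_le_left (le_max_of_le_left (vnorm_ge' n (Ψ 0) hi₀))
  by_cases hjN : j₀ = N
  · have : m = |Ψ N i₀| := by rw [hm, hjN]
    rw [this]
    exact le_max_of_le_left (le_max_of_le_right (vnorm_ge' n (Ψ N) hi₀))
  -- interior case
  have hj1 : 1 ≤ j₀ := by omega
  have hjlt : j₀ < N := by omega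
  have hxj : x j₀ ∈ Set.Icc (0:ℝ) 1 :=
    ⟨hx0 ▸ hxle 0 j₀ (Nat.zero_le _) (by omega), hxN ▸ hxle j₀ N (by omega) le_rfl⟩
  set s : ℝ := if 0 ≤ Ψ j₀ i₀ then 1 else -1 with hsdef
  have hs : s * Ψ j₀ i₀ = m := by
    rw [hm, hsdef]
    split_ifs with h
    · rw [one_mul, abs_of_nonneg h]
    · rw [abs_of_neg (lt_of_not_ge h)]; ring
  have hsabs : ∀ j k, |s * Ψ j k| = |Ψ j k| := by
    intro j k
    rw [abs_mul]
    have : |s| = 1 := by rw [hsdef]; split_ifs <;> simp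
    rw [this, one_mul]
  have hsle : ∀ j ≤ N, ∀ k, 1 ≤ k → k ≤ n → s * Ψ j k ≤ m := fun j hj k hk1 hk2 =>
    (le_abs_self _).trans ((hsabs j k).le.trans (hmax j hj k hk1 hk2))
  -- positive mesh widths
  have h₁ : 0 < x j₀ - x (j₀ - 1) := by
    have := hxm (j₀ - 1) (by omega)
    have he : j₀ - 1 + 1 = j₀ := by omega
    rw [he] at this
    linarith
  have h₂ : 0 < x (j₀+1) - x j₀ := by have := hxm j₀ hjlt; linarith
  -- s * d2m ≤ 0
  have key1 : s * d2m x Ψ j₀ i₀ ≤ 0 := by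
    have hrw : s * d2m x Ψ j₀ i₀ =
        ((s * Ψ (j₀+1) i₀ - s * Ψ j₀ i₀) / (x (j₀+1) - x j₀)
          - (s * Ψ j₀ i₀ - s * Ψ (j₀-1) i₀) / (x j₀ - x (j₀-1)))
          / (((x j₀ - x (j₀-1)) + (x (j₀+1) - x j₀)) / 2) := by
      rw [d2m]; ring
    rw [hrw, hs]
    apply div_nonpos_of_nonpos_of_nonneg
    · have t1 : (s * Ψ (j₀+1) i₀ - m) / (x (j₀+1) - x j₀) ≤ 0 :=
        div_nonpos_of_nonpos_of_nonneg
          (by have := hsle (j₀+1) (by omega) i₀ hp2a hp2b; linarith) h₂.le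
      have t2 : 0 ≤ (m - s * Ψ (j₀-1) i₀) / (x j₀ - x (j₀-1)) :=
        div_nonneg (by have := hsle (j₀-1) (by omega) i₀ hp2a hp2b; linarith) h₁.le
      linarith
    · linarith
  -- sum estimate
  have key2 : m * (∑ k ∈ Finset.Icc 1 n, A (x j₀) i₀ k)
      ≤ ∑ k ∈ Finset.Icc 1 n, A (x j₀) i₀ k * (s * Ψ j₀ k) := by
    rw [Finset.mul_sum]
    apply Finset.sum_le_sum
    intro k hk
    rw [Finset.mem_Icc] at hk
    by_cases hki : k = i₀
    · subst hki; rw [hs]; ring_nf; exact le_rfl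
    · have hA : A (x j₀) i₀ k ≤ 0 :=
        hAoff (x j₀) hxj i₀ k hp2a hp2b hk.1 hk.2 (Ne.symm hki)
      have := mul_le_mul_of_nonpos_left (hsle j₀ (by omega) k hk.1 hk.2) hA
      linarith [this]
  -- rewrite s * LN
  have key3 : s * LN n ε A x Ψ j₀ i₀ =
      -(ε i₀) * (s * d2m x Ψ j₀ i₀)
        + ∑ k ∈ Finset.Icc 1 n, A (x j₀) i₀ k * (s * Ψ j₀ k) := by
    rw [LN, mul_add]
    congr 1
    · ring
    · rw [Finset.mul_sum]
      exact Finset.sum_congr rfl fun k _ => by ring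
  have hεpos : 0 < ε i₀ := hε0 i₀ hp2a hp2b
  have hdiff : 0 ≤ -(ε i₀) * (s * d2m x Ψ j₀ i₀) :=
    by nlinarith [key1, hεpos]
  have hasum : α < ∑ k ∈ Finset.Icc 1 n, A (x j₀) i₀ k := hα (x j₀) hxj i₀ hp2a hp2b
  have chain : α * m ≤ s * LN n ε A x Ψ j₀ i₀ := by
    rw [key3]
    have h1 : α * m ≤ m * (∑ k ∈ Finset.Icc 1 n, A (x j₀) i₀ k) := by
      rw [mul_comm α m]
      exact mul_le_mul_of_nonneg_left hasum.le hm0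
    linarith [key2]
  have hLN : |LN n ε A x Ψ j₀ i₀| ≤ M :=
    hM j₀ hj1 (by omega) i₀ hp2a hp2b
  have hfin : α * m ≤ M := by
    calc α * m ≤ s * LN n ε A x Ψ j₀ i₀ := chain
    _ ≤ |s * LN n ε A x Ψ j₀ i₀| := le_abs_self _
    _ = |s| * |LN n ε A x Ψ j₀ i₀| := abs_mul _ _
    _ ≤ 1 * M := by
        have : |s| = 1 := by rw [hsdef]; split_ifs <;> simp
        rw [this, one_mul]; linarith [hLN]
    _ = M := one_mul M
  have : m ≤ (1 / α) * M := by
    rw [one_div_mul_eq_div]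
    rw [le_div_iff₀ hα0]
    linarith [hfin]
  exact le_max_of_le_right this
end
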